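/- arXiv:0710.3877 — 9 statements merged into one kernel-verified Lean document; each statement's English description precedes it below -/
import Mathlib

section
/- Let G be a bipartite graph with vertex sets X and Y which is regular with density p, meaning that every vertex of X has degree p|Y| and every vertex of Y has degree p|X| (so G has p|X||Y| edges), and let α : ℂ^X → ℂ^Y be defined by αf(y) = ∑_{x∈X, xy∈E(G)} f(x). Then: (a) if c₂ ≥ 0 is such that every f : X → ℂ with ∑_{x∈X} f(x) = 0 satisfies ‖αf‖ ≤ c₂·|X|^{1/2}|Y|^{1/2}·‖f‖, then the number of labelled 4-cycles of G starting in X is at most (p⁴ + p·c₂²)·|X|²|Y|²; and (b) if c₁ ≥ 0 is such that the number of labelled 4-cycles of G starting in X is at most (p⁴ + c₁)·|X|²|Y|², then every f : X → ℂ with ∑_{x∈X} f(x) = 0 satisfies ‖αf‖ ≤ c₁^{1/4}·|X|^{1/2}|Y|^{1/2}·‖f‖. -/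
/-!
Write `A` for the 0/1 biadjacency matrix of `G`, so that `α f = Aᵀ f` and the number of labelled
4-cycles is `∑ (A Aᵀ)ₓₓ'² = ∑ (Aᵀ A)ᵧᵧ'²`. By regularity the entries of `A Aᵀ` have mean `p²|Y|`
and those of `Aᵀ A` have mean `p²|X|`, so the cycle count exceeds `p⁴|X|²|Y|²` by the sum of
squared deviations from these means.

(a) Applied to the centred neighbourhood indicator `1_{N(y')} - p`, which has sum zero and squared
norm `p(1-p)|X|`, the spectral bound controls the deviations in the column `y'` of `Aᵀ A`.

(b) For `∑ f = 0` the constant `p²|Y|` can be subtracted from `A Aᵀ` in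
`‖α f‖² = ∑ (A Aᵀ)ₓₓ' f(x) conj f(x')`, and Cauchy–Schwarz bounds the result by `‖f‖²` times
the square root of the sum of squared deviations, which is at most `√c₁ |X||Y|`.
-/

open Finset Matrix
open scoped ComplexConjugate

theorem Real.sqrt_le_mul_sqrt_mul_sqrt_mul_sqrt_iff {s c a b t : ℝ} (hc : 0 ≤ c) (ha : 0 ≤ a)
    (hb : 0 ≤ b) (ht : 0 ≤ t) : √s ≤ c * √a * √b * √t ↔ s ≤ c ^ 2 * a * b * t := by
  have hrhs : c * √a * √b * √t = √(c ^ 2 * a * b * t) := by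
    rw [Real.sqrt_mul (by positivity), Real.sqrt_mul (by positivity),
      Real.sqrt_mul (by positivity), Real.sqrt_sq hc]
  rw [hrhs, Real.sqrt_le_sqrt_iff (by positivity)]

section Sums

variable {ι : Type*} [Fintype ι]

theorem sum_sq_eq_sum_sub_sq_add {v : ι → ℝ} {c : ℝ} (hv : ∑ i, v i = Fintype.card ι * c) :
    ∑ i, v i ^ 2 = ∑ i, (v i - c) ^ 2 + Fintype.card ι * c ^ 2 := by
  simp only [sub_sq, sum_add_distrib, sum_sub_distrib, ← sum_mul, ← mul_sum, hv, sum_const,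
    card_univ, nsmul_eq_mul]
  ring

variable {𝕜 : Type*} [RCLike 𝕜]

theorem sum_sum_sub_mul_mul_conj_of_sum_eq_zero {f : ι → 𝕜} (hf : ∑ i, f i = 0)
    (B : ι → ι → ℝ) (c : ℝ) :
    ∑ i, ∑ j, ((B i j - c : ℝ) : 𝕜) * (f i * conj (f j))
      = ∑ i, ∑ j, (B i j : 𝕜) * (f i * conj (f j)) := by
  have hc : ∑ i, ∑ j, (c : 𝕜) * (f i * conj (f j)) = 0 := by
    simp [← mul_sum, ← map_sum, hf]
  simp only [RCLike.ofReal_sub, sub_mul, sum_sub_distrib, hc, sub_zero]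

theorem norm_sum_sum_mul_mul_conj_le (B : ι → ι → ℝ) (f : ι → 𝕜) :
    ‖∑ i, ∑ j, (B i j : 𝕜) * (f i * conj (f j))‖
      ≤ (∑ i, ‖f i‖ ^ 2) * √(∑ i, ∑ j, B i j ^ 2) := by
  calc ‖∑ i, ∑ j, (B i j : 𝕜) * (f i * conj (f j))‖
      ≤ ∑ q : ι × ι, |B q.1 q.2| * (‖f q.1‖ * ‖f q.2‖) := by
        rw [← Fintype.sum_prod_type']
        refine (norm_sum_le _ _).trans_eq (sum_congr rfl fun q _ => ?_)
        simp
    _ ≤ √(∑ q : ι × ι, |B q.1 q.2| ^ 2) * √(∑ q : ι × ι, (‖f q.1‖ * ‖f q.2‖) ^ 2) :=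
        Real.sum_mul_le_sqrt_mul_sqrt _ _ _
    _ = (∑ i, ‖f i‖ ^ 2) * √(∑ i, ∑ j, B i j ^ 2) := by
        simp only [sq_abs, mul_pow, Fintype.sum_prod_type, ← mul_sum, ← sum_mul]
        rw [← sq, Real.sqrt_sq (by positivity), mul_comm]

end Sums

namespace Matrix

variable {X Y : Type*} [Fintype X] [Fintype Y] {R : Type*} [CommSemiring R]
  {𝕜 : Type*} [RCLike 𝕜]

theorem sum_sum_mul_transpose_apply (A : Matrix X Y R) :
    ∑ x, ∑ x', (A * Aᵀ) x x' = ∑ y, (∑ x, A x y) ^ 2 := by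
  simp only [mul_apply, transpose_apply, sq, sum_mul_sum]
  exact (sum_congr rfl fun _ _ => sum_comm).trans sum_comm

theorem sum_transpose_mul_apply_left (A : Matrix X Y R) (y' : Y) :
    ∑ y, (Aᵀ * A) y y' = ∑ x, A x y' * ∑ y, A x y := by
  simp only [mul_apply, transpose_apply, mul_sum]
  rw [sum_comm]
  exact sum_congr rfl fun _ _ => sum_congr rfl fun _ _ => mul_comm _ _

theorem sum_sum_sq_eq_trace_mul_transpose (M : Matrix X Y R) :
    ∑ x, ∑ y, M x y ^ 2 = trace (M * Mᵀ) := by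
  simp only [trace, diag_apply, mul_apply, transpose_apply, sq]

theorem sum_sq_mul_transpose_apply (A : Matrix X Y R) :
    ∑ x, ∑ x', (A * Aᵀ) x x' ^ 2 = ∑ y, ∑ y', (Aᵀ * A) y y' ^ 2 := by
  simp only [sum_sum_sq_eq_trace_mul_transpose, transpose_mul, transpose_transpose]
  rw [← Matrix.mul_assoc, trace_mul_comm, Matrix.mul_assoc, Matrix.mul_assoc]

theorem sum_norm_sq_sum_mul_eq (A : Matrix X Y ℝ) (f : X → 𝕜) :
    ((∑ y, ‖∑ x, (A x y : 𝕜) * f x‖ ^ 2 : ℝ) : 𝕜)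
      = ∑ x, ∑ x', ((A * Aᵀ) x x' : 𝕜) * (f x * conj (f x')) := by
  push_cast
  simp_rw [← RCLike.mul_conj, map_sum, sum_mul_sum, mul_apply, transpose_apply]
  push_cast
  simp_rw [sum_mul]
  rw [sum_comm]
  refine sum_congr rfl fun x _ => ?_
  rw [sum_comm]
  refine sum_congr rfl fun x' _ => sum_congr rfl fun y _ => ?_
  simp only [map_mul, RCLike.conj_ofReal]
  ring

theorem sum_norm_sq_sum_mul_le (A : Matrix X Y ℝ) {f : X → 𝕜} (hf : ∑ x, f x = 0) (c : ℝ) :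
    ∑ y, ‖∑ x, (A x y : 𝕜) * f x‖ ^ 2
      ≤ (∑ x, ‖f x‖ ^ 2) * √(∑ x, ∑ x', ((A * Aᵀ) x x' - c) ^ 2) := by
  calc ∑ y, ‖∑ x, (A x y : 𝕜) * f x‖ ^ 2
      = ‖((∑ y, ‖∑ x, (A x y : 𝕜) * f x‖ ^ 2 : ℝ) : 𝕜)‖ := by
        rw [RCLike.norm_ofReal, abs_of_nonneg (by positivity)]
    _ = ‖∑ x, ∑ x', (((A * Aᵀ) x x' - c : ℝ) : 𝕜) * (f x * conj (f x'))‖ := by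
        rw [sum_norm_sq_sum_mul_eq,
          sum_sum_sub_mul_mul_conj_of_sum_eq_zero hf (fun x x' => (A * Aᵀ) x x')]
    _ ≤ _ := norm_sum_sum_mul_mul_conj_le _ _

variable {A : Matrix X Y ℝ} {p : ℝ}

theorem sum_sum_sq_mul_transpose_sub_eq
    (hcol : ∀ y, ∑ x, A x y = p * Fintype.card X) :
    ∑ x, ∑ x', ((A * Aᵀ) x x' - p ^ 2 * Fintype.card Y) ^ 2
      = ∑ x, ∑ x', (A * Aᵀ) x x' ^ 2 - p ^ 4 * Fintype.card X ^ 2 * Fintype.card Y ^ 2 := by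
  have hsum : ∑ q : X × X, (A * Aᵀ) q.1 q.2
      = Fintype.card (X × X) * (p ^ 2 * Fintype.card Y) := by
    simp only [Fintype.sum_prod_type, sum_sum_mul_transpose_apply, hcol, sum_const, card_univ,
      nsmul_eq_mul, Fintype.card_prod]
    push_cast
    ring
  have hvar := sum_sq_eq_sum_sub_sq_add hsum
  simp only [Fintype.sum_prod_type, Fintype.card_prod] at hvar
  push_cast at hvar
  linarith

theorem sum_norm_sq_sum_mul_le_of_sum_sq_le
    (hcol : ∀ y, ∑ x, A x y = p * Fintype.card X) {c : ℝ} (hc : 0 ≤ c)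
    (hcycles : ∑ x, ∑ x', (A * Aᵀ) x x' ^ 2
      ≤ (p ^ 4 + c) * Fintype.card X ^ 2 * Fintype.card Y ^ 2)
    {f : X → 𝕜} (hf : ∑ x, f x = 0) :
    ∑ y, ‖∑ x, (A x y : 𝕜) * f x‖ ^ 2
      ≤ √c * Fintype.card X * Fintype.card Y * ∑ x, ‖f x‖ ^ 2 := by
  have hdev : √(∑ x, ∑ x', ((A * Aᵀ) x x' - p ^ 2 * Fintype.card Y) ^ 2)
      ≤ √c * Fintype.card X * Fintype.card Y := by
    rw [Real.sqrt_le_left (by positivity), sum_sum_sq_mul_transpose_sub_eq hcol]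
    rw [mul_pow, mul_pow, Real.sq_sqrt hc]
    linarith
  calc _ ≤ (∑ x, ‖f x‖ ^ 2) * √(∑ x, ∑ x', ((A * Aᵀ) x x' - p ^ 2 * Fintype.card Y) ^ 2) :=
        sum_norm_sq_sum_mul_le A hf _
    _ ≤ (∑ x, ‖f x‖ ^ 2) * (√c * Fintype.card X * Fintype.card Y) := by gcongr
    _ = _ := mul_comm _ _

theorem sum_sq_transpose_mul_apply_le (hA : ∀ x y, A x y ^ 2 = A x y)
    (hrow : ∀ x, ∑ y, A x y = p * Fintype.card Y) (hcol : ∀ y, ∑ x, A x y = p * Fintype.card X)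
    {c : ℝ} (hα : ∀ f : X → 𝕜, ∑ x, f x = 0 → ∑ y, ‖∑ x, (A x y : 𝕜) * f x‖ ^ 2
      ≤ c ^ 2 * Fintype.card X * Fintype.card Y * ∑ x, ‖f x‖ ^ 2)
    (y' : Y) :
    ∑ y, (Aᵀ * A) y y' ^ 2
      ≤ c ^ 2 * Fintype.card X * Fintype.card Y * (p * Fintype.card X - p ^ 2 * Fintype.card X)
        + Fintype.card Y * (p ^ 2 * Fintype.card X) ^ 2 := by
  set n : ℝ := (Fintype.card X : ℝ)
  set m : ℝ := (Fintype.card Y : ℝ)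
  set g : X → ℝ := fun x => A x y' - p
  have hg : ∑ x, (g x : 𝕜) = 0 := by
    norm_cast
    simp only [g, sum_sub_distrib, hcol, sum_const, card_univ, nsmul_eq_mul]
    ring
  have hg_sq : ∑ x, ‖(g x : 𝕜)‖ ^ 2 = p * n - p ^ 2 * n := by
    have hvar := sum_sq_eq_sum_sub_sq_add ((hcol y').trans (mul_comm _ _))
    simp only [hA, hcol] at hvar
    simp only [RCLike.norm_ofReal, sq_abs, g]
    linarith
  have hαg (y : Y) :
      ‖∑ x, (A x y : 𝕜) * (g x : 𝕜)‖ ^ 2 = ((Aᵀ * A) y y' - p ^ 2 * n) ^ 2 := by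
    have hreal : ∑ x, A x y * g x = (Aᵀ * A) y y' - p ^ 2 * n := by
      simp only [g, mul_sub, sum_sub_distrib, ← sum_mul, hcol, mul_apply, transpose_apply]
      ring
    have hcast : ∑ x, (A x y : 𝕜) * (g x : 𝕜) = ((∑ x, A x y * g x : ℝ) : 𝕜) := by
      push_cast
      rfl
    rw [hcast, RCLike.norm_ofReal, sq_abs, hreal]
  have hsum : ∑ y, (Aᵀ * A) y y' = m * (p ^ 2 * n) := by
    simp only [sum_transpose_mul_apply_left, hrow, ← sum_mul, hcol]
    ring
  have hbound := hα _ hg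
  simp only [hαg, hg_sq] at hbound
  rw [sum_sq_eq_sum_sub_sq_add hsum]
  linarith

theorem sum_sum_sq_transpose_mul_le (hA : ∀ x y, A x y ^ 2 = A x y)
    (hrow : ∀ x, ∑ y, A x y = p * Fintype.card Y) (hcol : ∀ y, ∑ x, A x y = p * Fintype.card X)
    {c : ℝ} (hα : ∀ f : X → 𝕜, ∑ x, f x = 0 → ∑ y, ‖∑ x, (A x y : 𝕜) * f x‖ ^ 2
      ≤ c ^ 2 * Fintype.card X * Fintype.card Y * ∑ x, ‖f x‖ ^ 2) :
    ∑ y, ∑ y', (Aᵀ * A) y y' ^ 2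
      ≤ (p ^ 4 + p * c ^ 2) * Fintype.card X ^ 2 * Fintype.card Y ^ 2 := by
  rw [sum_comm]
  refine (sum_le_sum fun y' _ => sum_sq_transpose_mul_apply_le hA hrow hcol hα y').trans ?_
  rw [sum_const, card_univ, nsmul_eq_mul]
  nlinarith [sq_nonneg (c * p * Fintype.card X * Fintype.card Y)]

end Matrix

section BipartiteGraph

variable {X Y : Type*} [DecidableEq X] [DecidableEq Y] (E : Finset (X × Y))

def biadjMatrix : Matrix X Y ℝ := Matrix.of fun x y => if (x, y) ∈ E then 1 else 0

theorem biadjMatrix_apply_sq (x : X) (y : Y) : biadjMatrix E x y ^ 2 = biadjMatrix E x y := by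
  by_cases h : (x, y) ∈ E <;> simp [biadjMatrix, h]

theorem card_filter_mem_eq_sum_biadjMatrix_row [Fintype Y] (x : X) :
    (#(univ.filter fun y => (x, y) ∈ E) : ℝ) = ∑ y, biadjMatrix E x y := by
  simp [biadjMatrix]

theorem card_filter_mem_eq_sum_biadjMatrix_col [Fintype X] (y : Y) :
    (#(univ.filter fun x => (x, y) ∈ E) : ℝ) = ∑ x, biadjMatrix E x y := by
  simp [biadjMatrix]

theorem sum_filter_mem_eq_sum_biadjMatrix_mul [Fintype X] {𝕜 : Type*} [RCLike 𝕜] (f : X → 𝕜)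
    (y : Y) :
    ∑ x ∈ univ.filter (fun x => (x, y) ∈ E), f x = ∑ x, (biadjMatrix E x y : 𝕜) * f x := by
  simp [biadjMatrix, sum_filter]

theorem card_filter_fourCycle_eq [Fintype X] [Fintype Y] :
    (#(univ.filter fun q : X × Y × X × Y =>
        (q.1, q.2.1) ∈ E ∧ (q.2.2.1, q.2.1) ∈ E ∧ (q.2.2.1, q.2.2.2) ∈ E ∧ (q.1, q.2.2.2) ∈ E) : ℝ)
      = ∑ x, ∑ x', (biadjMatrix E * (biadjMatrix E)ᵀ) x x' ^ 2 := by
  simp only [card_filter, Fintype.sum_prod_type, mul_apply, transpose_apply, sq, sum_mul_sum]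
  push_cast
  refine sum_congr rfl fun x _ => sum_comm.trans <| sum_congr rfl fun x' _ =>
    sum_congr rfl fun y _ => sum_congr rfl fun y' _ => ?_
  simp only [biadjMatrix, of_apply, ite_zero_mul_ite_zero, mul_one]
  exact if_congr (by tauto) rfl rfl

end BipartiteGraph

/-- Theorem 2.8 (Gowers, Quasirandom Groups): for a regular bipartite graph
`G ⊆ X × Y` of density `p`, the quasirandomness (4-cycle) count and the singular
value bound for the adjacency map `α` on sum-zero functions are polynomially
equivalent, with the explicit constants `c₁ = p c₂²` and `c₂ = c₁^{1/4}`. -/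
theorem regular_bipartite_quasirandom_iff_spectral
    (X Y : Type) [Fintype X] [Fintype Y] [DecidableEq X] [DecidableEq Y]
    (E : Finset (X × Y)) (p : ℝ)
    (hdX : ∀ x : X,
      ((Finset.univ.filter (fun y : Y => (x, y) ∈ E)).card : ℝ) = p * Fintype.card Y)
    (hdY : ∀ y : Y,
      ((Finset.univ.filter (fun x : X => (x, y) ∈ E)).card : ℝ) = p * Fintype.card X) :
    (∀ c₂ : ℝ, 0 ≤ c₂ →
      (∀ f : X → ℂ, (∑ x : X, f x) = 0 →
        Real.sqrt (∑ y : Y, ‖∑ x ∈ Finset.univ.filter (fun x : X => (x, y) ∈ E), f x‖ ^ 2)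
          ≤ c₂ * Real.sqrt (Fintype.card X) * Real.sqrt (Fintype.card Y) *
              Real.sqrt (∑ x : X, ‖f x‖ ^ 2)) →
      ((Finset.univ.filter (fun q : X × Y × X × Y =>
          (q.1, q.2.1) ∈ E ∧ (q.2.2.1, q.2.1) ∈ E ∧
          (q.2.2.1, q.2.2.2) ∈ E ∧ (q.1, q.2.2.2) ∈ E)).card : ℝ)
        ≤ (p ^ 4 + p * c₂ ^ 2) * (Fintype.card X : ℝ) ^ 2 * (Fintype.card Y : ℝ) ^ 2)
    ∧
    (∀ c₁ : ℝ, 0 ≤ c₁ →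
      ((Finset.univ.filter (fun q : X × Y × X × Y =>
          (q.1, q.2.1) ∈ E ∧ (q.2.2.1, q.2.1) ∈ E ∧
          (q.2.2.1, q.2.2.2) ∈ E ∧ (q.1, q.2.2.2) ∈ E)).card : ℝ)
        ≤ (p ^ 4 + c₁) * (Fintype.card X : ℝ) ^ 2 * (Fintype.card Y : ℝ) ^ 2 →
      ∀ f : X → ℂ, (∑ x : X, f x) = 0 →
        Real.sqrt (∑ y : Y, ‖∑ x ∈ Finset.univ.filter (fun x : X => (x, y) ∈ E), f x‖ ^ 2)
          ≤ c₁ ^ ((1 : ℝ) / 4) * Real.sqrt (Fintype.card X) * Real.sqrt (Fintype.card Y) *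
              Real.sqrt (∑ x : X, ‖f x‖ ^ 2)) := by
  have hrow (x : X) : ∑ y, biadjMatrix E x y = p * Fintype.card Y :=
    (card_filter_mem_eq_sum_biadjMatrix_row E x).symm.trans (hdX x)
  have hcol (y : Y) : ∑ x, biadjMatrix E x y = p * Fintype.card X :=
    (card_filter_mem_eq_sum_biadjMatrix_col E y).symm.trans (hdY y)
  simp only [sum_filter_mem_eq_sum_biadjMatrix_mul (𝕜 := ℂ), card_filter_fourCycle_eq]
  refine ⟨fun c₂ hc₂ hα => ?_, fun c₁ hc₁ hcycles f hf => ?_⟩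
  · rw [sum_sq_mul_transpose_apply]
    refine sum_sum_sq_transpose_mul_le (𝕜 := ℂ) (biadjMatrix_apply_sq E) hrow hcol fun f hf => ?_
    exact (Real.sqrt_le_mul_sqrt_mul_sqrt_mul_sqrt_iff hc₂ (by positivity) (by positivity)
      (by positivity)).1 (hα f hf)
  · have hc₁_rpow : (c₁ ^ ((1 : ℝ) / 4)) ^ 2 = √c₁ := by
      rw [Real.sqrt_eq_rpow, ← Real.rpow_natCast, ← Real.rpow_mul hc₁]
      norm_num
    rw [Real.sqrt_le_mul_sqrt_mul_sqrt_mul_sqrt_iff (by positivity) (by positivity)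
      (by positivity) (by positivity), hc₁_rpow]
    exact sum_norm_sq_sum_mul_le_of_sum_sq_le hcol hc₁ hcycles hf
end

section
/- Let q be a prime power and let PSL₂(q) denote the quotient of the group SL₂(F_q) of 2×2 matrices over the field F_q with determinant 1 by its center. Then every nontrivial complex representation of PSL₂(q) has dimension at least (q−1)/2. -/
/-!
Restrict the representation to the unipotent subgroup `U = {[[1, b], [0, 1]]} ≅ (F, +)` and cut
it into isotypic components, one for each additive character `ψ` of `F`. Since
`diag(t, t⁻¹)` conjugates `[[1, b], [0, 1]]` to `[[1, t²b], [0, 1]]`, the `ψ`-component and the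
`ψ(t² ·)`-component have the same dimension. The conjugates of `U` generate `SL₂(F)`, so a
nontrivial representation is nontrivial on `U` and some `ψ ≠ 1` occurs; then so do its shifts
by the `(q - 1) / 2` nonzero squares, which are pairwise distinct characters.
-/

open Module Matrix Matrix.SpecialLinearGroup
open scoped MatrixGroups

section Isotypic

variable {A V : Type*} [AddCommGroup A] [Fintype A] [AddCommGroup V] [Module ℂ V]

noncomputable def isotypicProj (ρ : AddChar A (End ℂ V)) (ψ : AddChar A ℂ) : End ℂ V :=
  (Fintype.card A : ℂ)⁻¹ • ∑ b, ψ (-b) • ρ b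

variable (ρ : AddChar A (End ℂ V))

lemma apply_mul_isotypicProj (ψ : AddChar A ℂ) (a : A) :
    ρ a * isotypicProj ρ ψ = ψ a • isotypicProj ρ ψ := by
  have hsum : ρ a * ∑ b, ψ (-b) • ρ b = ψ a • ∑ b, ψ (-b) • ρ b := by
    rw [Finset.mul_sum, Finset.smul_sum]
    refine Fintype.sum_equiv (Equiv.addLeft a) _ _ fun b => ?_
    rw [Equiv.coe_addLeft, smul_smul, ← ψ.map_add_eq_mul, mul_smul_comm, ρ.map_add_eq_mul]
    congr 2
    beta_reduce
    abel
  rw [isotypicProj, mul_smul_comm, hsum, smul_comm]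

lemma isIdempotentElem_isotypicProj (ψ : AddChar A ℂ) :
    IsIdempotentElem (isotypicProj ρ ψ) := by
  have hterm : ∀ b, (ψ (-b) • ρ b) * isotypicProj ρ ψ = isotypicProj ρ ψ := fun b => by
    rw [smul_mul_assoc, apply_mul_isotypicProj, smul_smul, ← ψ.map_add_eq_mul, neg_add_cancel,
      ψ.map_zero_eq_one, one_smul]
  rw [IsIdempotentElem]
  nth_rw 1 [isotypicProj]
  rw [smul_mul_assoc, Finset.sum_mul, Finset.sum_congr rfl fun b _ => hterm b, Finset.sum_const,
    Finset.card_univ, ← Nat.cast_smul_eq_nsmul ℂ, smul_smul,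
    inv_mul_cancel₀ (Nat.cast_ne_zero.2 Fintype.card_ne_zero), one_smul]

lemma sum_isotypicProj : ∑ ψ : AddChar A ℂ, isotypicProj ρ ψ = 1 := by
  classical
  simp only [isotypicProj]
  rw [← Finset.smul_sum, Finset.sum_comm]
  simp only [← Finset.sum_smul, AddChar.sum_apply_eq_ite, neg_eq_zero, ite_smul, zero_smul,
    Finset.sum_ite_eq', Finset.mem_univ, if_true, ρ.map_zero_eq_one]
  rw [smul_smul, inv_mul_cancel₀ (Nat.cast_ne_zero.2 Fintype.card_ne_zero), one_smul]

lemma exists_ne_one_isotypicProj_ne_zero (hρ : ρ ≠ 1) : ∃ ψ ≠ 1, isotypicProj ρ ψ ≠ 0 := by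
  by_contra! h
  have hP : isotypicProj ρ 1 = 1 := by
    rw [← sum_isotypicProj ρ, Finset.sum_eq_single 1 (fun ψ _ hψ => h ψ hψ) (by simp)]
  refine hρ (DFunLike.ext _ _ fun a => ?_)
  rw [← mul_one (ρ a), ← hP, apply_mul_isotypicProj, AddChar.one_apply, one_smul, hP,
    AddChar.one_apply]

lemma finrank_eq_sum_finrank_range_isotypicProj [FiniteDimensional ℂ V] :
    finrank ℂ V = ∑ ψ : AddChar A ℂ, finrank ℂ (LinearMap.range (isotypicProj ρ ψ)) := by
  apply Nat.cast_injective (R := ℂ)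
  rw [← LinearMap.trace_one, ← sum_isotypicProj ρ, map_sum, Nat.cast_sum]
  exact Finset.sum_congr rfl fun ψ _ =>
    (LinearMap.IsIdempotentElem.isProj_range _ (isIdempotentElem_isotypicProj ρ ψ)).trace

lemma card_le_finrank_of_isotypicProj_ne_zero [FiniteDimensional ℂ V] (s : Finset (AddChar A ℂ))
    (hs : ∀ ψ ∈ s, isotypicProj ρ ψ ≠ 0) : s.card ≤ finrank ℂ V := by
  rw [finrank_eq_sum_finrank_range_isotypicProj ρ, Finset.card_eq_sum_ones]
  calc ∑ ψ ∈ s, 1 ≤ ∑ ψ ∈ s, finrank ℂ (LinearMap.range (isotypicProj ρ ψ)) :=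
        Finset.sum_le_sum fun ψ hψ =>
          Submodule.one_le_finrank_iff.2 (LinearMap.range_eq_bot.not.2 (hs ψ hψ))
    _ ≤ _ := Finset.sum_le_sum_of_subset (Finset.subset_univ s)

end Isotypic

section MulShift

variable {R V : Type*} [Ring R] [Fintype R] [AddCommGroup V] [Module ℂ V]
  (ρ : AddChar R (End ℂ V)) (ψ : AddChar R ℂ) (u : Rˣ) {g : End ℂ V}

lemma mul_isotypicProj_mulShift (hg : ∀ b, g * ρ b = ρ (u * b) * g) :
    g * isotypicProj ρ (ψ.mulShift u) = isotypicProj ρ ψ * g := by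
  rw [isotypicProj, isotypicProj, mul_smul_comm, smul_mul_assoc, Finset.mul_sum, Finset.sum_mul]
  congr 1
  refine Fintype.sum_equiv u.mulLeft _ _ fun b => ?_
  rw [Units.mulLeft_apply, mul_smul_comm, hg, smul_mul_assoc, AddChar.mulShift_apply, mul_neg]

lemma isotypicProj_mulShift_ne_zero (hg : IsUnit g) (hgρ : ∀ b, g * ρ b = ρ (u * b) * g)
    (hψ : isotypicProj ρ ψ ≠ 0) : isotypicProj ρ (ψ.mulShift u) ≠ 0 := by
  intro h
  have := mul_isotypicProj_mulShift ρ ψ u hgρ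
  rw [h, mul_zero] at this
  exact hψ (hg.mul_left_eq_zero.1 this.symm)

end MulShift

lemma card_units_le_two_mul_card_range_powMonoidHom_two (R : Type*) [CommRing R] [IsDomain R] :
    Nat.card Rˣ ≤ 2 * Nat.card (powMonoidHom 2 : Rˣ →* Rˣ).range := by
  rw [← Subgroup.index_ker, ← rootsOfUnity_eq_ker, ← (rootsOfUnity 2 R).card_mul_index]
  exact Nat.mul_le_mul_right _ (card_rootsOfUnity R 2)

lemma card_sub_one_le_two_mul_finrank {F V : Type*} [Field F] [Fintype F] [AddCommGroup V]
    [Module ℂ V] [FiniteDimensional ℂ V] (ρ : AddChar F (End ℂ V)) {ψ : AddChar F ℂ}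
    (hψ : ψ ≠ 1) (h : ∀ t : Fˣ, isotypicProj ρ (ψ.mulShift ((t ^ 2 : Fˣ) : F)) ≠ 0) :
    Fintype.card F - 1 ≤ 2 * finrank ℂ V := by
  classical
  have hsquares := card_units_le_two_mul_card_range_powMonoidHom_two F
  rw [Nat.card_units, Nat.card_eq_fintype_card] at hsquares
  set squares := (powMonoidHom 2 : Fˣ →* Fˣ).range
  have hinj : Function.Injective fun u : squares => ψ.mulShift ((u : Fˣ) : F) :=
    (AddChar.to_mulShift_inj_of_isPrimitive (.of_ne_one hψ)).comp
      (Units.val_injective.comp Subtype.val_injective)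
  have hcard := card_le_finrank_of_isotypicProj_ne_zero ρ
    (Finset.univ.image fun u : squares => ψ.mulShift ((u : Fˣ) : F)) (by
      simp only [Finset.mem_image, Finset.mem_univ, true_and, forall_exists_index]
      rintro _ ⟨_, t, rfl⟩ rfl
      exact h t)
  rw [Finset.card_image_of_injective _ hinj, Finset.card_univ, ← Nat.card_eq_fintype_card]
    at hcard
  omega

namespace Matrix.SpecialLinearGroup

variable {F : Type*} [Field F]

@[simps]
def upperTransvection : AddChar F SL(2, F) where
  toFun := transvection zero_ne_one
  map_zero_eq_one' := transvection_coeff_zero _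
  map_add_eq_mul' := transvection_add _

def weyl : SL(2, F) := ⟨!![0, 1; -1, 0], by simp [det_fin_two_of]⟩

lemma transvection_one_zero_eq_weyl_conj (c : F) :
    transvection one_ne_zero c = weyl * transvection zero_ne_one (-c) * weyl⁻¹ := by
  rw [eq_mul_inv_iff_mul_eq]
  ext i j
  rw [coe_mul, coe_mul]
  fin_cases i <;> fin_cases j <;>
    simp [weyl, transvection_coe, Matrix.mul_apply, Fin.sum_univ_two]

lemma diag2_mul_transvection (t : F) (ht : t ≠ 0) (b : F) :
    diag2 t ht * transvection zero_ne_one b =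
      transvection zero_ne_one (t ^ 2 * b) * diag2 t ht := by
  ext i j
  fin_cases i <;> fin_cases j <;>
    simp [diag2_coe', transvection_coe, Matrix.mul_apply, Fin.sum_univ_two]
  field_simp

lemma eq_one_of_compAddChar_upperTransvection_eq_one {M : Type*} [Monoid M]
    {f : SL(2, F) →* M} (hf : f.compAddChar upperTransvection = 1) : f = 1 := by
  have hupper : ∀ b, f (transvection zero_ne_one b) = 1 := fun b => DFunLike.congr_fun hf b
  have hlower : ∀ c, f (transvection one_ne_zero c) = 1 := fun c => by
    rw [transvection_one_zero_eq_weyl_conj, map_mul, map_mul, hupper, mul_one, ← map_mul,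
      mul_inv_cancel, map_one]
  ext A
  refine SL2.transvection_induction (f · = 1) (fun i j hij c => ?_)
    (fun A B hA hB => by rw [map_mul, hA, hB, one_mul]) A
  fin_cases i <;> fin_cases j
  exacts [absurd rfl hij, hupper c, hlower c, absurd rfl hij]

end Matrix.SpecialLinearGroup

theorem psl2_min_rep_dimension_general
    (q : ℕ)
    (F : Type) [Field F] [Fintype F] (hF : Fintype.card F = q)
    (d : ℕ)
    (ρ : (Matrix.SpecialLinearGroup (Fin 2) F ⧸
            Subgroup.center (Matrix.SpecialLinearGroup (Fin 2) F)) →*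
          Matrix.GeneralLinearGroup (Fin d) ℂ)
    (hnt : ∃ g, ρ g ≠ 1) :
    ((q : ℝ) - 1) / 2 ≤ (d : ℝ) := by
  let σ : SL(2, F) →* End ℂ (Fin d → ℂ) := (Units.coeHom _).comp
    (GeneralLinearGroup.toLin.toMonoidHom.comp (ρ.comp (QuotientGroup.mk' _)))
  have hσ : σ ≠ 1 := by
    obtain ⟨g, hg⟩ := hnt
    obtain ⟨A, rfl⟩ := QuotientGroup.mk'_surjective _ g
    refine fun h => hg (GeneralLinearGroup.toLin.injective (Units.val_injective ?_))
    simpa [σ] using DFunLike.congr_fun h A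
  let τ := σ.compAddChar upperTransvection
  obtain ⟨ψ, hψ1, hψ⟩ := exists_ne_one_isotypicProj_ne_zero τ
    fun h => hσ (eq_one_of_compAddChar_upperTransvection_eq_one h)
  have hbound := card_sub_one_le_two_mul_finrank τ hψ1 fun t =>
    isotypicProj_mulShift_ne_zero τ ψ _ ((Group.isUnit (diag2 (t : F) t.ne_zero)).map σ)
      (fun b => by
        simp only [τ, MonoidHom.compAddChar_apply, Function.comp_apply, upperTransvection_apply,
          ← map_mul, Units.val_pow_eq_pow_val, diag2_mul_transvection]) hψ
  rw [hF, finrank_fin_fun] at hbound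
  rw [div_le_iff₀ two_pos, sub_le_iff_le_add]
  exact_mod_cast (by omega : q ≤ d * 2 + 1)

/-- Theorem 3.1 (Frobenius; Gowers, Quasirandom Groups): every nontrivial complex
representation of `PSL₂(q)` has dimension at least `(q - 1) / 2`. -/
theorem psl2_min_rep_dimension
    (q : ℕ) (hq : IsPrimePow q)
    (F : Type) [Field F] [Fintype F] (hF : Fintype.card F = q)
    (d : ℕ)
    (ρ : (Matrix.SpecialLinearGroup (Fin 2) F ⧸
            Subgroup.center (Matrix.SpecialLinearGroup (Fin 2) F)) →*
          Matrix.GeneralLinearGroup (Fin d) ℂ)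
    (hnt : ∃ g, ρ g ≠ 1) :
    ((q : ℝ) - 1) / 2 ≤ (d : ℝ) :=
  psl2_min_rep_dimension_general q F hF d ρ hnt
end

section
/- Let Γ be a finite group of order n and let k be such that every nontrivial complex representation of Γ has dimension at least k. Let A be any subset of Γ and let f : Γ → ℂ be any function with ∑_{x∈Γ} f(x) = 0. Then ‖A*f‖ ≤ (|A|·n/k)^{1/2}·‖f‖, where A*f(y) = ∑_{uv=y} 1_A(u)·f(v) and ‖·‖ is the ℓ² norm on ℂ^Γ, i.e. ‖f‖² = ∑_{x∈Γ}|f(x)|². -/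
/-!
Let `S f = 1_A * f` and `T = S†S`, a positive operator with `‖S f‖² = re ⟪T f, f⟫` and
`tr T = |Γ| |A|`. As `S† f = 1_{A⁻¹} * f`, both `S` and `S†`, hence `T`, commute with right
translations and preserve the functions of sum zero. Let `μ` be the top eigenvalue of `T` on the sum-zero functions, so that
`‖S f‖² ≤ μ ‖f‖²` there. The `μ`-eigenspace of `T` among the sum-zero functions is a nonzero
representation of `Γ` under right translation with no nonzero invariant vector (an invariant
function is constant, hence zero), so its dimension `d` is at least `k`. As `T ≥ 0`,
`μ k ≤ μ d ≤ tr T = |Γ| |A|`.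
-/

open scoped InnerProductSpace Pointwise
open Module RCLike

namespace Representation

variable {K G V : Type*} [Field K] [Group G] [AddCommGroup V] [Module K V]
  [FiniteDimensional K V]

noncomputable def toMatrixGL (ρ : Representation K G V) :
    G →* Matrix.GeneralLinearGroup (Fin (finrank K V)) K :=
  (Units.map (LinearMap.toMatrixAlgEquiv (Module.finBasis K V)).toMonoidHom).comp ρ.asGroupHom

theorem toMatrixGL_eq_one_iff (ρ : Representation K G V) (g : G) :
    ρ.toMatrixGL g = 1 ↔ ρ g = 1 := by
  rw [Units.ext_iff]
  simp [toMatrixGL, Representation.asGroupHom]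

end Representation

section

variable {𝕜 E : Type*} [RCLike 𝕜] [NormedAddCommGroup E] [InnerProductSpace 𝕜 E]
  [FiniteDimensional 𝕜 E]

theorem LinearMap.IsSymmetric.exists_hasEigenvalue_re_inner_le [Nontrivial E]
    {T : E →ₗ[𝕜] E} (hT : T.IsSymmetric) :
    ∃ μ : ℝ, Module.End.HasEigenvalue T μ ∧ ∀ v, re ⟪T v, v⟫_𝕜 ≤ μ * ‖v‖ ^ 2 := by
  refine ⟨_, hT.hasEigenvalue_iSup_of_finiteDimensional, fun v => ?_⟩
  rcases eq_or_ne v 0 with rfl | hv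
  · simp
  have hbdd :
      BddAbove (Set.range fun x : { x : E // x ≠ 0 } => re ⟪T x, x⟫_𝕜 / ‖(x : E)‖ ^ 2) := by
    refine ⟨‖LinearMap.toContinuousLinearMap T‖, ?_⟩
    rintro _ ⟨x, rfl⟩
    exact (le_abs_self _).trans
      (ContinuousLinearMap.rayleighQuotient_le_norm (LinearMap.toContinuousLinearMap T) x)
  rw [← div_le_iff₀ (by positivity)]
  exact le_ciSup hbdd (⟨v, hv⟩ : { x : E // x ≠ 0 })

theorem LinearMap.IsSymmetric.exists_eigenvector_mem_re_inner_le {T : E →ₗ[𝕜] E}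
    (hT : T.IsSymmetric) {p : Submodule 𝕜 E} (hp : ∀ v ∈ p, T v ∈ p) (hp0 : p ≠ ⊥) :
    ∃ μ : ℝ, ∃ w ∈ p, w ≠ 0 ∧ T w = (μ : 𝕜) • w ∧ ∀ v ∈ p, re ⟪T v, v⟫_𝕜 ≤ μ * ‖v‖ ^ 2 := by
  have := Submodule.nontrivial_iff_ne_bot.mpr hp0
  obtain ⟨μ, hμ, hle⟩ := (hT.restrict_invariant hp).exists_hasEigenvalue_re_inner_le
  obtain ⟨w, hw, hw0⟩ := hμ.exists_hasEigenvector
  refine ⟨μ, w, w.2, by simpa using hw0, ?_, fun v hv => hle ⟨v, hv⟩⟩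
  simpa using congrArg Subtype.val (Module.End.mem_eigenspace_iff.mp hw)

theorem LinearMap.IsPositive.mul_finrank_le_re_trace {T : E →ₗ[𝕜] E} (hT : T.IsPositive)
    {μ : ℝ} {W : Submodule 𝕜 E} (hW : ∀ w ∈ W, T w = (μ : 𝕜) • w) :
    μ * finrank 𝕜 W ≤ re (T.trace 𝕜 E) := by
  classical
  set v : Fin (finrank 𝕜 W) → E := fun i => stdOrthonormalBasis 𝕜 W i
  have hv : Orthonormal 𝕜 v :=
    (stdOrthonormalBasis 𝕜 W).orthonormal.comp_linearIsometry W.subtypeₗᵢ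
  obtain ⟨u, b, hvu, hb⟩ := hv.toSubtypeRange.exists_orthonormalBasis_extension
  have hterm : ∀ i, re ⟪v i, T (v i)⟫_𝕜 = μ := fun i => by
    rw [hW _ (stdOrthonormalBasis 𝕜 W i).2, inner_smul_right, inner_self_eq_norm_sq_to_K, hv.1 i]
    simp
  calc μ * finrank 𝕜 W = ∑ x ∈ Finset.univ.image v, re ⟪x, T x⟫_𝕜 := by
        rw [Finset.sum_image fun i _ j _ h => hv.linearIndependent.injective h]
        simp [hterm, mul_comm]
    _ ≤ ∑ x ∈ u, re ⟪x, T x⟫_𝕜 := by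
        refine Finset.sum_le_sum_of_subset_of_nonneg ?_ fun x _ _ => hT.re_inner_nonneg_right x
        rintro _ h
        obtain ⟨i, -, rfl⟩ := Finset.mem_image.mp h
        exact hvu ⟨i, rfl⟩
    _ = re (T.trace 𝕜 E) := by
        rw [T.trace_eq_sum_inner b, hb, map_sum, ← Finset.sum_coe_sort u]

end

namespace ConvolutionBound

variable {Γ : Type*}

section

variable [Fintype Γ]

def sumZero : Submodule ℂ (EuclideanSpace ℂ Γ) where
  carrier := {f | ∑ x, f x = 0}
  add_mem' hf hg := by simp_all [Finset.sum_add_distrib]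
  zero_mem' := by simp
  smul_mem' c f hf := by simp_all [← Finset.mul_sum]

theorem mem_sumZero {f : EuclideanSpace ℂ Γ} : f ∈ sumZero ↔ ∑ x, f x = 0 := Iff.rfl

end

variable [Group Γ]

noncomputable def indicatorConv (A : Finset Γ) :
    EuclideanSpace ℂ Γ →ₗ[ℂ] EuclideanSpace ℂ Γ where
  toFun f := WithLp.toLp 2 fun y => ∑ u ∈ A, f (u⁻¹ * y)
  map_add' f g := by ext; simp [Finset.sum_add_distrib]
  map_smul' c f := by ext; simp [Finset.mul_sum]

@[simp]
theorem indicatorConv_apply (A : Finset Γ) (f : EuclideanSpace ℂ Γ) (y : Γ) :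
    indicatorConv A f y = ∑ u ∈ A, f (u⁻¹ * y) := rfl

noncomputable def rightRegular : Representation ℂ Γ (EuclideanSpace ℂ Γ) where
  toFun g :=
    { toFun f := WithLp.toLp 2 fun y => f (y * g)
      map_add' _ _ := rfl
      map_smul' _ _ := rfl }
  map_one' := by ext; simp
  map_mul' g h := by ext f y; exact congrArg f (mul_assoc y g h).symm

@[simp]
theorem rightRegular_apply (g : Γ) (f : EuclideanSpace ℂ Γ) (y : Γ) :
    rightRegular g f y = f (y * g) := rfl

theorem indicatorConv_rightRegular (A : Finset Γ) (g : Γ) (f : EuclideanSpace ℂ Γ) :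
    indicatorConv A (rightRegular g f) = rightRegular g (indicatorConv A f) := by
  ext y; simp [mul_assoc]

theorem indicatorConv_single [DecidableEq Γ] (A : Finset Γ) (x y : Γ) :
    indicatorConv A (EuclideanSpace.single x 1) y = if y * x⁻¹ ∈ A then 1 else 0 := by
  have h : ∀ u : Γ, u⁻¹ * y = x ↔ u = y * x⁻¹ := fun u => by
    rw [inv_mul_eq_iff_eq_mul, eq_mul_inv_iff_mul_eq, eq_comm]
  simp only [indicatorConv_apply, PiLp.single_apply, h]
  exact Finset.sum_ite_eq' A _ _

variable [Fintype Γ]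

local notation "T[" A "]" => LinearMap.adjoint (indicatorConv A) ∘ₗ indicatorConv A

theorem indicatorConv_mem_sumZero (A : Finset Γ) {f : EuclideanSpace ℂ Γ} (hf : f ∈ sumZero) :
    indicatorConv A f ∈ sumZero := by
  rw [mem_sumZero] at hf ⊢
  simp only [indicatorConv_apply]
  rw [Finset.sum_comm]
  refine Finset.sum_eq_zero fun u _ => ?_
  rw [← hf]
  exact Fintype.sum_equiv (Equiv.mulLeft u⁻¹) _ _ fun _ => rfl

theorem rightRegular_mem_sumZero (g : Γ) {f : EuclideanSpace ℂ Γ} (hf : f ∈ sumZero) :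
    rightRegular g f ∈ sumZero := by
  rw [mem_sumZero] at hf ⊢
  exact (Fintype.sum_equiv (Equiv.mulRight g) _ _ fun _ => rfl).trans hf

theorem eq_zero_of_mem_sumZero_of_forall_rightRegular_eq {f : EuclideanSpace ℂ Γ}
    (hf : f ∈ sumZero) (hinv : ∀ g, rightRegular g f = f) : f = 0 := by
  have hconst : ∀ g, f g = f 1 := fun g => by
    simpa using congrArg (· 1) (hinv g)
  have hcard : (Fintype.card Γ : ℂ) * f 1 = 0 := by
    simpa [mem_sumZero, hconst] using hf
  ext g
  rw [hconst]
  simpa using hcard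

theorem adjoint_indicatorConv [DecidableEq Γ] (A : Finset Γ) :
    LinearMap.adjoint (indicatorConv A) = indicatorConv A⁻¹ := by
  refine ((LinearMap.eq_adjoint_iff _ _).mpr fun u v => ?_).symm
  simp only [PiLp.inner_apply, RCLike.inner_apply, indicatorConv_apply, Finset.sum_inv_index,
    inv_inv, map_sum, Finset.sum_mul, Finset.mul_sum]
  rw [Finset.sum_comm]
  conv_rhs => rw [Finset.sum_comm]
  refine Finset.sum_congr rfl fun a _ => ?_
  exact Fintype.sum_equiv (Equiv.mulLeft a) _ _ fun y => by simp

theorem trace_adjoint_comp_indicatorConv (A : Finset Γ) :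
    LinearMap.trace ℂ _ T[A] = Fintype.card Γ * A.card := by
  classical
  have hrow : ∀ x : Γ, ∑ y : Γ, (if y * x⁻¹ ∈ A then 1 else 0 : ℂ) = A.card := fun x => by
    refine (Fintype.sum_equiv (Equiv.mulRight x⁻¹) _ (fun z => if z ∈ A then (1 : ℂ) else 0)
      fun _ => rfl).trans ?_
    simp
  simp only [LinearMap.trace_eq_sum_inner _ (EuclideanSpace.basisFun Γ ℂ),
    EuclideanSpace.basisFun_apply, LinearMap.comp_apply, LinearMap.adjoint_inner_right,
    PiLp.inner_apply, indicatorConv_single]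
  simp [apply_ite, ← ite_and, hrow]

theorem adjoint_comp_indicatorConv_rightRegular (A : Finset Γ) (g : Γ) (f : EuclideanSpace ℂ Γ) :
    T[A] (rightRegular g f) = rightRegular g (T[A] f) := by
  classical
  simp only [adjoint_indicatorConv, LinearMap.comp_apply, indicatorConv_rightRegular]

theorem adjoint_comp_indicatorConv_mem_sumZero (A : Finset Γ) {f : EuclideanSpace ℂ Γ}
    (hf : f ∈ sumZero) : T[A] f ∈ sumZero := by
  classical
  rw [adjoint_indicatorConv]
  exact indicatorConv_mem_sumZero _ (indicatorConv_mem_sumZero _ hf)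

noncomputable def sumZeroEigenspace (A : Finset Γ) (μ : ℂ) :
    Subrepresentation (rightRegular (Γ := Γ)) where
  toSubmodule := sumZero ⊓ Module.End.eigenspace T[A] μ
  apply_mem_toSubmodule g f hf := by
    simp only [Submodule.mem_inf, Module.End.mem_eigenspace_iff] at hf ⊢
    refine ⟨rightRegular_mem_sumZero g hf.1, ?_⟩
    rw [adjoint_comp_indicatorConv_rightRegular, hf.2, map_smul]

theorem eigenvalue_mul_le_card_mul_card {k : ℕ}
    (hrep : ∀ (d : ℕ) (ρ : Γ →* Matrix.GeneralLinearGroup (Fin d) ℂ), (∃ g, ρ g ≠ 1) → k ≤ d)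
    (A : Finset Γ) {μ : ℝ} {w : EuclideanSpace ℂ Γ} (hw : w ∈ sumZero) (hw0 : w ≠ 0)
    (hμw : T[A] w = (μ : ℂ) • w) :
    μ * k ≤ Fintype.card Γ * A.card := by
  set V := sumZeroEigenspace A μ
  have hwV : w ∈ V.toSubmodule := ⟨hw, Module.End.mem_eigenspace_iff.mpr hμw⟩
  have hV : ∃ g, V.toRepresentation g ≠ 1 := by
    by_contra! htriv
    exact hw0 <| eq_zero_of_mem_sumZero_of_forall_rightRegular_eq hw fun g =>
      congrArg Subtype.val (LinearMap.congr_fun (htriv g) ⟨w, hwV⟩)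
  have hk : k ≤ finrank ℂ V.toSubmodule :=
    hrep _ V.toRepresentation.toMatrixGL
      (hV.imp fun g => mt (V.toRepresentation.toMatrixGL_eq_one_iff g).mp)
  have hpos := LinearMap.isPositive_adjoint_comp_self (indicatorConv A)
  have hμ : 0 ≤ μ := eigenvalue_nonneg_of_nonneg
    (Module.End.hasEigenvalue_of_hasEigenvector ⟨Module.End.mem_eigenspace_iff.mpr hμw, hw0⟩)
    hpos.re_inner_nonneg_right
  have htrace := hpos.mul_finrank_le_re_trace (W := V.toSubmodule) fun _ hv =>
    Module.End.mem_eigenspace_iff.mp hv.2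
  rw [trace_adjoint_comp_indicatorConv] at htrace
  calc μ * k ≤ μ * finrank ℂ V.toSubmodule := by gcongr
    _ ≤ Fintype.card Γ * A.card := by simpa using htrace

theorem norm_indicatorConv_le {k : ℕ} (hk0 : 0 < k)
    (hrep : ∀ (d : ℕ) (ρ : Γ →* Matrix.GeneralLinearGroup (Fin d) ℂ), (∃ g, ρ g ≠ 1) → k ≤ d)
    (A : Finset Γ) {f : EuclideanSpace ℂ Γ} (hf : f ∈ sumZero) :
    ‖indicatorConv A f‖ ≤ √(A.card * Fintype.card Γ / k) * ‖f‖ := by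
  rcases eq_or_ne f 0 with rfl | hf0
  · simp
  obtain ⟨μ, w, hw, hw0, hμw, hrayleigh⟩ :=
    (LinearMap.isPositive_adjoint_comp_self (indicatorConv A)).isSymmetric
      |>.exists_eigenvector_mem_re_inner_le (fun _ => adjoint_comp_indicatorConv_mem_sumZero A)
        ((Submodule.ne_bot_iff _).mpr ⟨f, hf, hf0⟩)
  have hμ : μ ≤ A.card * Fintype.card Γ / k := by
    have := eigenvalue_mul_le_card_mul_card (μ := μ) hrep A hw hw0 hμw
    rw [le_div_iff₀ (by positivity)]
    linarith
  have hsq : ‖indicatorConv A f‖ ^ 2 ≤ A.card * Fintype.card Γ / k * ‖f‖ ^ 2 :=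
    calc ‖indicatorConv A f‖ ^ 2 = re ⟪T[A] f, f⟫_ℂ := by
          rw [LinearMap.comp_apply, LinearMap.adjoint_inner_left, inner_self_eq_norm_sq]
      _ ≤ μ * ‖f‖ ^ 2 := hrayleigh f hf
      _ ≤ A.card * Fintype.card Γ / k * ‖f‖ ^ 2 := by gcongr
  rw [← Real.sqrt_sq (norm_nonneg f), ← Real.sqrt_mul (by positivity)]
  exact Real.le_sqrt_of_sq_le hsq

end ConvolutionBound

open ConvolutionBound in
theorem convolution_operator_bound_general
    (Γ : Type) [Group Γ] [Fintype Γ] (k : ℕ) (hk0 : 0 < k)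
    (hrep : ∀ (d : ℕ) (ρ : Γ →* Matrix.GeneralLinearGroup (Fin d) ℂ),
      (∃ g, ρ g ≠ 1) → k ≤ d)
    (A : Finset Γ) (f : Γ → ℂ) (hf : (∑ x : Γ, f x) = 0) :
    Real.sqrt (∑ y : Γ, ‖∑ u ∈ A, f (u⁻¹ * y)‖ ^ 2)
      ≤ Real.sqrt ((A.card : ℝ) * (Fintype.card Γ : ℝ) / (k : ℝ)) *
          Real.sqrt (∑ x : Γ, ‖f x‖ ^ 2) := by
  simpa only [EuclideanSpace.norm_eq, indicatorConv_apply, WithLp.ofLp_toLp] using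
    norm_indicatorConv_le hk0 hrep A (f := WithLp.toLp 2 f) hf

/-- Lemma 3.2 (Gowers, Quasirandom Groups): if every nontrivial complex
representation of a finite group `Γ` of order `n` has dimension at least `k`,
then for every `A ⊆ Γ` and every sum-zero `f : Γ → ℂ`,
`‖A * f‖ ≤ √(|A| n / k) ‖f‖`, where `A * f (y) = ∑_{uv = y} 1_A(u) f(v)
= ∑_{u ∈ A} f (u⁻¹ y)` and `‖·‖` is the ℓ² norm. -/
theorem convolution_operator_bound
    (Γ : Type) [Group Γ] [Fintype Γ] [DecidableEq Γ] (k : ℕ) (hk0 : 0 < k)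
    (hrep : ∀ (d : ℕ) (ρ : Γ →* Matrix.GeneralLinearGroup (Fin d) ℂ),
      (∃ g, ρ g ≠ 1) → k ≤ d)
    (A : Finset Γ) (f : Γ → ℂ) (hf : (∑ x : Γ, f x) = 0) :
    Real.sqrt (∑ y : Γ, ‖∑ u ∈ A, f (u⁻¹ * y)‖ ^ 2)
      ≤ Real.sqrt ((A.card : ℝ) * (Fintype.card Γ : ℝ) / (k : ℝ)) *
          Real.sqrt (∑ x : Γ, ‖f x‖ ^ 2) :=
  convolution_operator_bound_general Γ k hk0 hrep A f hf
end

section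
/- Let v₁, …, v_n be unit vectors in ℂ^m (with the standard Hermitian inner product ⟨·,·⟩). Then ∑_{i=1}^n ∑_{j=1}^n |⟨v_i, v_j⟩|² ≥ n²/m. -/
/-!
Let `A` be the `m × n` matrix with columns `vᵢ`. The double sum is the squared Frobenius norm of
the Gram matrix `Aᴴ A`, which equals that of the `m × m` frame operator `S = A Aᴴ`, since both are
`tr ((Aᴴ A)²) = tr ((A Aᴴ)²)`. The trace of `S` is `∑ ‖vᵢ‖² = n`, so Cauchy–Schwarz on the `m`
diagonal entries of `S` gives `n² ≤ m ∑ₖ |Sₖₖ|² ≤ m ‖S‖²_F`.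
-/

open Matrix RCLike Finset

variable {𝕜 ι κ : Type*} [RCLike 𝕜] [Fintype ι]

namespace Matrix

lemma re_trace_conjTranspose_mul_self [Fintype κ] (M : Matrix ι κ 𝕜) :
    re (trace (Mᴴ * M)) = ∑ i, ∑ j, ‖M i j‖ ^ 2 := by
  simp only [trace, diag_apply, mul_apply, conjTranspose_apply, star_def, RCLike.conj_mul, map_sum]
  rw [Finset.sum_comm]
  norm_cast

lemma sum_norm_sq_mul_conjTranspose_self [Fintype κ] (A : Matrix ι κ 𝕜) :
    ∑ i, ∑ j, ‖(A * Aᴴ) i j‖ ^ 2 = ∑ i, ∑ j, ‖(Aᴴ * A) i j‖ ^ 2 := by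
  simp only [← re_trace_conjTranspose_mul_self, conjTranspose_mul, conjTranspose_conjTranspose]
  rw [Matrix.mul_assoc, trace_mul_comm]
  simp only [Matrix.mul_assoc]

lemma sq_re_trace_le_card_mul_sum_norm_sq (M : Matrix ι ι 𝕜) :
    re (trace M) ^ 2 ≤ Fintype.card ι * ∑ i, ∑ j, ‖M i j‖ ^ 2 := calc
  re (trace M) ^ 2 = (∑ i, re (M i i)) ^ 2 := by rw [trace, map_sum]; rfl
  _ ≤ Fintype.card ι * ∑ i, re (M i i) ^ 2 := sq_sum_le_card_mul_sum_sq
  _ ≤ Fintype.card ι * ∑ i, ∑ j, ‖M i j‖ ^ 2 := by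
    gcongr with i
    calc re (M i i) ^ 2 ≤ ‖M i i‖ ^ 2 := by
          rw [← sq_abs]; gcongr; exact abs_re_le_norm _
      _ ≤ ∑ j, ‖M i j‖ ^ 2 :=
          single_le_sum (f := fun j ↦ ‖M i j‖ ^ 2) (fun _ _ ↦ by positivity) (mem_univ i)

lemma gram_eq_conjTranspose_mul_self (v : κ → EuclideanSpace 𝕜 ι) :
    gram 𝕜 v = (of fun i k ↦ v k i)ᴴ * of fun i k ↦ v k i := by
  ext k l
  simp [mul_apply, EuclideanSpace.inner_eq_star_dotProduct, dotProduct, mul_comm]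

lemma re_trace_gram [Fintype κ] {E : Type*} [SeminormedAddCommGroup E] [InnerProductSpace 𝕜 E]
    (v : κ → E) : re (trace (gram 𝕜 v)) = ∑ k, ‖v k‖ ^ 2 := by
  simp [trace]

end Matrix

theorem sq_sum_norm_sq_le_card_mul_sum_norm_sq_inner [Fintype κ] (v : κ → EuclideanSpace 𝕜 ι) :
    (∑ k, ‖v k‖ ^ 2) ^ 2 ≤ Fintype.card ι * ∑ k, ∑ l, ‖inner 𝕜 (v k) (v l)‖ ^ 2 := by
  set A : Matrix ι κ 𝕜 := of fun i k ↦ v k i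
  have hgram : gram 𝕜 v = Aᴴ * A := gram_eq_conjTranspose_mul_self v
  have htrace : re (trace (A * Aᴴ)) = ∑ k, ‖v k‖ ^ 2 := by
    rw [trace_mul_comm, ← hgram, re_trace_gram]
  have hsum : ∑ k, ∑ l, ‖inner 𝕜 (v k) (v l)‖ ^ 2 = ∑ i, ∑ j, ‖(A * Aᴴ) i j‖ ^ 2 := by
    rw [sum_norm_sq_mul_conjTranspose_self, ← hgram]
    rfl
  rw [← htrace, hsum]
  exact sq_re_trace_le_card_mul_sum_norm_sq _

/-- Lemma 4.4 (Gowers, Quasirandom Groups): for unit vectors `v₁, …, vₙ` in `ℂᵐ`,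
`∑_{i,j} |⟨vᵢ, vⱼ⟩|² ≥ n²/m`. -/
theorem sum_sq_inner_ge (m n : ℕ) (v : Fin n → EuclideanSpace ℂ (Fin m))
    (hv : ∀ i, ‖v i‖ = 1) :
    (n : ℝ) ^ 2 / (m : ℝ) ≤ ∑ i : Fin n, ∑ j : Fin n, ‖(inner ℂ (v i) (v j) : ℂ)‖ ^ 2 := by
  refine div_le_of_le_mul₀ (by positivity) (by positivity) ?_
  rw [mul_comm]
  simpa [hv] using sq_sum_norm_sq_le_card_mul_sum_norm_sq_inner v
end

section
/- Let G be a finite group of order n and let ρ : G → U(m) be a nontrivial irreducible unitary representation of G on ℂ^m. Then there exist unit vectors v, w ∈ ℂ^m such that the function f : G → ℂ defined by f(g) = ⟨ρ(g)v, w⟩ satisfies: |f(g)| ≤ 1 for every g ∈ G, ∑_{g∈G} f(g) = 0, and ∑_{h∈G} |∑_{g∈G} f(g)·conj(f(gh))|² ≥ n³/m⁴. In particular, if every function from G to the closed unit disc with average zero is c-quasirandom, then every nontrivial representation of G has dimension at least c^{-1/4}. -/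
/-!
Let `π` be a nontrivial irreducible unitary representation of dimension `m` of a group of order
`n`, and `v` a unit vector. The matrix coefficient `f g = ⟪v, π g v⟫` sums to `⟪v, ∑ g, π g v⟫ = 0`,
because `∑ g, π g v` is fixed by `G` and the fixed subspace is a proper invariant subspace.
Schur's lemma makes every group average `∑ g, π g ∘ A ∘ π g⁻¹` the scalar `(n / m) · tr A`; for a
rank-one `A` this is the Schur orthogonality relation, which gives
`∑ g, f g * conj (f (g * h)) = (n / m) * conj (f h)` and `∑ h, ‖f h‖² = n / m`, hence the energy
`∑ h, ‖∑ g, f g * conj (f (g * h))‖²` equals `(n / m)³`.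

For the dimension bound, a nontrivial representation by invertible matrices is conjugate to a
unitary one (average the Gram operators `star (ρ g) * ρ g` and take a square root), and a minimal
invariant subspace on which `G` acts nontrivially is irreducible, since an invariant subspace of it
and its orthogonal complement inside it would both be fixed.
-/

open scoped ComplexConjugate ComplexInnerProductSpace
open Module

variable {G : Type*} [Group G]

/-- `f` is `c`-quasirandom when this is at most `c * |G| ^ 3`. -/
noncomputable def correlationEnergy [Fintype G] (f : G → ℂ) : ℝ :=
  ∑ h, ‖∑ g, f g * conj (f (g * h))‖ ^ 2

namespace UnitaryRep

variable {V : Type*} [NormedAddCommGroup V] [InnerProductSpace ℂ V] (π : G →* (V ≃ₗᵢ[ℂ] V))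

def IsInvariant (S : Submodule ℂ V) : Prop := ∀ g : G, ∀ x ∈ S, π g x ∈ S

def IsIrreducible : Prop := ∀ S : Submodule ℂ V, IsInvariant π S → S = ⊥ ∨ S = ⊤

def fixedSubspace : Submodule ℂ V where
  carrier := {x | ∀ g, π g x = x}
  add_mem' hx hy g := by simp [hx g, hy g]
  zero_mem' _ := map_zero _
  smul_mem' c x hx g := by simp [hx g]

noncomputable def restrict (W : Submodule ℂ V) (hW : IsInvariant π W) : G →* (W ≃ₗᵢ[ℂ] W) where
  toFun g :=
    { toFun x := ⟨π g x, hW g x x.2⟩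
      invFun x := ⟨π g⁻¹ x, hW g⁻¹ x x.2⟩
      map_add' x y := by ext; simp
      map_smul' c x := by ext; simp
      left_inv x := by ext; simp
      right_inv x := by ext; simp
      norm_map' x := (π g).norm_map x }
  map_one' := by ext; simp
  map_mul' g h := by ext; simp

lemma restrict_apply (W : Submodule ℂ V) (hW : IsInvariant π W) (g : G) (x : W) :
    (restrict π W hW g x : V) = π g x := rfl

lemma map_mul_apply (g h : G) (x : V) : π (g * h) x = π g (π h x) := by
  rw [map_mul]; rfl

lemma map_inv_apply (g : G) (x : V) : π g⁻¹ x = (π g).symm x := by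
  rw [map_inv]; rfl

lemma inner_map_left (g : G) (x y : V) : ⟪π g x, y⟫ = ⟪x, π g⁻¹ y⟫ := by
  rw [← (π g).inner_map_map x, map_inv_apply, LinearIsometryEquiv.apply_symm_apply]

lemma isInvariant_fixedSubspace : IsInvariant π (fixedSubspace π) :=
  fun g x hx h => by rw [hx g, hx h]

variable {π}

lemma fixedSubspace_ne_top (hnt : ∃ g, π g ≠ 1) : fixedSubspace π ≠ ⊤ := by
  obtain ⟨g, hg⟩ := hnt
  refine fun htop => hg (LinearIsometryEquiv.ext fun x => ?_)
  exact (htop ▸ Submodule.mem_top : x ∈ fixedSubspace π) g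

lemma nontrivial_of_exists_ne_one (hnt : ∃ g, π g ≠ 1) : Nontrivial V := by
  obtain ⟨g, hg⟩ := hnt
  by_contra h
  rw [not_nontrivial_iff_subsingleton] at h
  exact hg (LinearIsometryEquiv.ext fun _ => Subsingleton.elim _ _)

lemma IsInvariant.inf {S T : Submodule ℂ V} (hS : IsInvariant π S) (hT : IsInvariant π T) :
    IsInvariant π (S ⊓ T) :=
  fun g x hx => ⟨hS g x hx.1, hT g x hx.2⟩

lemma IsInvariant.orthogonal {S : Submodule ℂ V} (hS : IsInvariant π S) : IsInvariant π Sᗮ := by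
  intro g x hx u hu
  rw [← inv_inv g, ← inner_map_left]
  exact hx _ (hS g⁻¹ u hu)

lemma IsIrreducible.exists_eq_smul_id [FiniteDimensional ℂ V] [Nontrivial V]
    (hirr : IsIrreducible π) (T : V →ₗ[ℂ] V) (hT : ∀ g x, T (π g x) = π g (T x)) :
    ∃ c : ℂ, T = c • LinearMap.id := by
  obtain ⟨c, hc⟩ := Module.End.exists_eigenvalue T
  have hinv : IsInvariant π (Module.End.eigenspace T c) := fun g x hx => by
    rw [Module.End.mem_eigenspace_iff] at hx ⊢
    rw [hT, hx, map_smul]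
  have htop := (hirr _ hinv).resolve_left hc
  refine ⟨c, LinearMap.ext fun x => ?_⟩
  exact Module.End.mem_eigenspace_iff.mp (htop ▸ Submodule.mem_top)

lemma exists_minimal_isInvariant_not_le_fixedSubspace [FiniteDimensional ℂ V]
    (hnt : ∃ g, π g ≠ 1) :
    ∃ W, IsInvariant π W ∧ ¬ W ≤ fixedSubspace π ∧
      ∀ U, IsInvariant π U → U ≤ W → U = ⊥ ∨ U = W := by
  obtain ⟨W, ⟨hWinv, hWfix⟩, hWmin⟩ :=
    wellFounded_lt.has_min {W : Submodule ℂ V | IsInvariant π W ∧ ¬ W ≤ fixedSubspace π}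
      ⟨⊤, fun _ _ _ => Submodule.mem_top, fun h => fixedSubspace_ne_top hnt (top_le_iff.mp h)⟩
  have le_fixed_of_lt {U} (hU : IsInvariant π U) (hUW : U < W) : U ≤ fixedSubspace π :=
    not_not.mp fun h => hWmin U ⟨hU, h⟩ hUW
  refine ⟨W, hWinv, hWfix, fun U hU hUW => ?_⟩
  by_cases hUfix : U ≤ fixedSubspace π
  · refine .inl (by_contra fun hU0 => hWfix ?_)
    have hcompl_lt : Uᗮ ⊓ W < W := by
      refine lt_of_le_of_ne inf_le_right fun h => hU0 ?_
      exact (Submodule.orthogonal_disjoint U).eq_bot_of_le (hUW.trans (h ▸ inf_le_left))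
    rw [← Submodule.sup_orthogonal_inf_of_hasOrthogonalProjection hUW]
    exact sup_le hUfix (le_fixed_of_lt (hU.orthogonal.inf hWinv) hcompl_lt)
  · exact .inr (eq_of_le_of_not_lt hUW fun h => hUfix (le_fixed_of_lt hU h))

lemma isIrreducible_restrict {W : Submodule ℂ V} (hW : IsInvariant π W)
    (hmin : ∀ U, IsInvariant π U → U ≤ W → U = ⊥ ∨ U = W) :
    IsIrreducible (restrict π W hW) := by
  intro S hS
  have hmap : IsInvariant π (S.map W.subtype) := by
    rintro g _ ⟨x, hx, rfl⟩
    exact ⟨_, hS g x hx, rfl⟩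
  refine (hmin _ hmap (Submodule.map_subtype_le W S)).imp (fun h => ?_) fun h => ?_
  · exact Submodule.map_injective_of_injective W.injective_subtype (by rw [h, Submodule.map_bot])
  · exact Submodule.map_injective_of_injective W.injective_subtype
      (by rw [h, Submodule.map_subtype_top])

lemma exists_restrict_ne_one {W : Submodule ℂ V} (hW : IsInvariant π W)
    (hWfix : ¬ W ≤ fixedSubspace π) : ∃ g, restrict π W hW g ≠ 1 := by
  obtain ⟨x, hxW, hx⟩ := SetLike.not_le_iff_exists.mp hWfix
  obtain ⟨g, hg⟩ := not_forall.mp hx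
  refine ⟨g, fun h => hg ?_⟩
  simpa [restrict_apply] using congr_arg Subtype.val (DFunLike.congr_fun h ⟨x, hxW⟩)

variable [Fintype G]

variable (π) in
lemma sum_map_apply_mem_fixedSubspace (x : V) : ∑ g, π g x ∈ fixedSubspace π := fun h => by
  rw [map_sum]
  exact Fintype.sum_equiv (Equiv.mulLeft h) _ _ fun g => (map_mul_apply π h g x).symm

lemma IsIrreducible.sum_map_apply_eq_zero (hirr : IsIrreducible π) (hnt : ∃ g, π g ≠ 1) (x : V) :
    ∑ g, π g x = 0 := by
  have hbot := (hirr _ (isInvariant_fixedSubspace π)).resolve_right (fixedSubspace_ne_top hnt)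
  simpa [hbot] using sum_map_apply_mem_fixedSubspace π x

variable (π) in
noncomputable def groupAverage (A : V →ₗ[ℂ] V) : V →ₗ[ℂ] V :=
  ∑ g, (π g).toLinearEquiv.conj A

lemma groupAverage_apply (A : V →ₗ[ℂ] V) (x : V) :
    groupAverage π A x = ∑ g, π g (A (π g⁻¹ x)) := by
  simp [groupAverage, LinearEquiv.conj_apply]

lemma groupAverage_map_apply (A : V →ₗ[ℂ] V) (h : G) (x : V) :
    groupAverage π A (π h x) = π h (groupAverage π A x) := by
  rw [groupAverage_apply, groupAverage_apply, map_sum]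
  refine (Fintype.sum_equiv (Equiv.mulLeft h) _ _ fun g => ?_).symm
  rw [Equiv.coe_mulLeft, map_mul_apply π h g, ← map_mul_apply π (h * g)⁻¹, mul_inv_rev,
    inv_mul_cancel_right]

lemma trace_groupAverage [FiniteDimensional ℂ V] (A : V →ₗ[ℂ] V) :
    LinearMap.trace ℂ V (groupAverage π A) = Fintype.card G * LinearMap.trace ℂ V A := by
  simp [groupAverage, map_sum, LinearMap.trace_conj']

section

variable [FiniteDimensional ℂ V] [Nontrivial V]

lemma IsIrreducible.groupAverage_eq_smul_id (hirr : IsIrreducible π) (A : V →ₗ[ℂ] V) :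
    groupAverage π A =
      ((Fintype.card G / finrank ℂ V : ℂ) * LinearMap.trace ℂ V A) • LinearMap.id := by
  obtain ⟨c, hc⟩ := hirr.exists_eq_smul_id _ (groupAverage_map_apply A)
  have htrace := trace_groupAverage (π := π) A
  rw [hc, map_smul, LinearMap.trace_id, smul_eq_mul] at htrace
  have hm : (finrank ℂ V : ℂ) ≠ 0 := Nat.cast_ne_zero.mpr finrank_pos.ne'
  rw [hc, div_mul_eq_mul_div, ← htrace, mul_div_cancel_right₀ _ hm]

/-- Schur orthogonality: the group average of the rank-one operator `w ↦ ⟪z, w⟫ • y`. -/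
lemma IsIrreducible.sum_inner_mul_inner_inv (hirr : IsIrreducible π) (x y z u : V) :
    ∑ g, ⟪x, π g y⟫ * ⟪z, π g⁻¹ u⟫ = Fintype.card G / finrank ℂ V * (⟪z, y⟫ * ⟪x, u⟫) := by
  have h := congr_arg (fun T : V →ₗ[ℂ] V => ⟪x, T u⟫)
    (hirr.groupAverage_eq_smul_id ((innerₛₗ ℂ z).smulRight y))
  simp only [groupAverage_apply, LinearMap.smulRight_apply, innerₛₗ_apply_apply, map_smul,
    inner_sum, inner_smul_right, LinearMap.trace_smulRight, LinearMap.smul_apply,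
    LinearMap.id_apply] at h
  rw [← mul_assoc, ← h]
  exact Finset.sum_congr rfl fun g _ => mul_comm _ _

section MatrixCoefficient

variable (hirr : IsIrreducible π) {v : V} (hv : ‖v‖ = 1)
include hirr hv

lemma sum_inner_mul_conj_inner (h : G) :
    ∑ g, ⟪v, π g v⟫ * conj ⟪v, π (g * h) v⟫ =
      Fintype.card G / finrank ℂ V * conj ⟪v, π h v⟫ := by
  have hvv : ⟪v, v⟫ = 1 := by simp [inner_self_eq_norm_sq_to_K, hv]
  have hterm (g : G) : conj ⟪v, π (g * h) v⟫ = ⟪π h v, π g⁻¹ v⟫ := by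
    rw [inner_conj_symm, map_mul_apply, inner_map_left]
  simp only [hterm, hirr.sum_inner_mul_inner_inv, hvv, mul_one, inner_conj_symm]

lemma sum_norm_inner_sq : ∑ g, ‖⟪v, π g v⟫‖ ^ 2 = Fintype.card G / finrank ℂ V := by
  have h := sum_inner_mul_conj_inner hirr hv 1
  simp only [mul_one, RCLike.mul_conj, map_one, LinearIsometryEquiv.coe_one, id,
    inner_self_eq_norm_sq_to_K, hv, one_pow] at h
  apply Complex.ofReal_injective
  push_cast
  exact h

lemma correlationEnergy_inner :
    correlationEnergy (fun g => ⟪v, π g v⟫) = (Fintype.card G / finrank ℂ V : ℝ) ^ 3 := by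
  simp only [correlationEnergy, sum_inner_mul_conj_inner hirr hv, norm_mul, RCLike.norm_conj,
    mul_pow, ← Finset.mul_sum, sum_norm_inner_sq hirr hv]
  simp only [Complex.norm_div, RCLike.norm_natCast]
  ring

end MatrixCoefficient

end

theorem IsIrreducible.exists_correlationEnergy_eq [FiniteDimensional ℂ V]
    (hirr : IsIrreducible π) (hnt : ∃ g, π g ≠ 1) :
    ∃ v : V, ‖v‖ = 1 ∧ (∀ g, ‖⟪v, π g v⟫‖ ≤ 1) ∧ ∑ g, ⟪v, π g v⟫ = 0 ∧
      correlationEnergy (fun g => ⟪v, π g v⟫) = (Fintype.card G / finrank ℂ V : ℝ) ^ 3 := by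
  have := nontrivial_of_exists_ne_one hnt
  obtain ⟨v, hv⟩ := exists_norm_eq V zero_le_one
  refine ⟨v, hv, fun g => ?_, ?_, correlationEnergy_inner hirr hv⟩
  · calc ‖⟪v, π g v⟫‖ ≤ ‖v‖ * ‖π g v‖ := norm_inner_le_norm _ _
      _ = 1 := by simp [hv]
  · rw [← inner_sum, hirr.sum_map_apply_eq_zero hnt, inner_zero_right]

theorem exists_correlationEnergy_eq [FiniteDimensional ℂ V] (hnt : ∃ g, π g ≠ 1) :
    ∃ M : ℕ, 0 < M ∧ M ≤ finrank ℂ V ∧ ∃ f : G → ℂ, (∀ g, ‖f g‖ ≤ 1) ∧ ∑ g, f g = 0 ∧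
      correlationEnergy f = (Fintype.card G / M : ℝ) ^ 3 := by
  obtain ⟨W, hW, hWfix, hmin⟩ := exists_minimal_isInvariant_not_le_fixedSubspace hnt
  have hntW := exists_restrict_ne_one hW hWfix
  have := nontrivial_of_exists_ne_one hntW
  obtain ⟨v, -, hbound, hsum, henergy⟩ :=
    (isIrreducible_restrict hW hmin).exists_correlationEnergy_eq hntW
  exact ⟨finrank ℂ W, finrank_pos, Submodule.finrank_le W, _, hbound, hsum, henergy⟩

end UnitaryRep

lemma mul_mul_inv_mem_unitary {R : Type*} [Monoid R] [StarMul R] (Q : Rˣ) {a : R} (ha : IsUnit a)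
    (h : star a * (star ↑Q * ↑Q) * a = star ↑Q * ↑Q) : (Q : R) * a * ↑Q⁻¹ ∈ unitary R := by
  refine ((Q.isUnit.mul ha).mul Q⁻¹.isUnit).mem_unitary_of_star_mul_self ?_
  calc star ((Q : R) * a * ↑Q⁻¹) * (↑Q * a * ↑Q⁻¹)
      = star (↑Q⁻¹ : R) * (star a * (star ↑Q * ↑Q) * a) * ↑Q⁻¹ := by
        simp only [star_mul, mul_assoc]
    _ = star (↑Q * ↑Q⁻¹ : R) * (↑Q * ↑Q⁻¹) := by rw [h, star_mul]; simp only [mul_assoc]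
    _ = 1 := by simp

section Unitarization

variable [Fintype G] {A : Type*} [CStarAlgebra A] [PartialOrder A] [StarOrderedRing A]

/-- Weyl's unitarian trick: `P = ∑ g, star (ρ g) * ρ g` is `ρ`-invariant and `P ≥ 1`, so it is
`star Q * Q` for an invertible `Q`. -/
lemma exists_conj_mem_unitary (ρ : G →* Aˣ) :
    ∃ Q : Aˣ, ∀ g, (Q : A) * ρ g * ↑Q⁻¹ ∈ unitary A := by
  set P : A := ∑ g, star (ρ g : A) * ρ g
  have hP : IsStrictlyPositive P := by
    refine isStrictlyPositive_one.of_le ?_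
    calc (1 : A) = star (ρ 1 : A) * ρ 1 := by simp
      _ ≤ P := Finset.single_le_sum (f := fun g => star (ρ g : A) * ρ g)
          (fun g _ => star_mul_self_nonneg _) (Finset.mem_univ 1)
  obtain ⟨q, hq, hPq⟩ := (CStarAlgebra.isStrictlyPositive_TFAE.out 0 5).mp hP
  refine ⟨hq.unit, fun h => mul_mul_inv_mem_unitary _ (ρ h).isUnit ?_⟩
  rw [hq.unit_spec, ← hPq, Finset.mul_sum, Finset.sum_mul]
  refine Fintype.sum_equiv (Equiv.mulRight h) _ _ fun g => ?_
  simp only [Equiv.coe_mulRight, map_mul, Units.val_mul, star_mul, mul_assoc]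

lemma exists_unitary_monoidHom (ρ : G →* Aˣ) :
    ∃ σ : G →* unitary A, ∀ g, σ g = 1 → ρ g = 1 := by
  obtain ⟨Q, hQ⟩ := exists_conj_mem_unitary ρ
  refine ⟨((Units.coeHom A).comp ((MulAut.conj Q).toMonoidHom.comp ρ)).codRestrict _ hQ,
    fun g hg => ?_⟩
  exact (MulEquiv.map_eq_one_iff (MulAut.conj Q)).mp (Units.ext (congr_arg Subtype.val hg))

end Unitarization

namespace Matrix

variable {𝕜 n : Type*} [RCLike 𝕜] [Fintype n] [DecidableEq n]

noncomputable def UnitaryGroup.toLinearIsometryEquiv :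
    unitaryGroup n 𝕜 →* (EuclideanSpace 𝕜 n ≃ₗᵢ[𝕜] EuclideanSpace 𝕜 n) :=
  Unitary.linearIsometryEquiv.toMonoidHom.comp
    (Unitary.map (StarMonoidHom.ofClass (toEuclideanCLM (n := n) (𝕜 := 𝕜)))).toMonoidHom

lemma UnitaryGroup.toLinearIsometryEquiv_apply (U : unitaryGroup n 𝕜) (x : EuclideanSpace 𝕜 n) :
    toLinearIsometryEquiv U x = WithLp.toLp 2 ((U : Matrix n n 𝕜) *ᵥ x.ofLp) := rfl

lemma UnitaryGroup.toLinearIsometryEquiv_injective :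
    Function.Injective (toLinearIsometryEquiv : unitaryGroup n 𝕜 → _) :=
  Unitary.linearIsometryEquiv.injective.comp
    (Unitary.map_injective (toEuclideanCLM (n := n) (𝕜 := 𝕜)).injective)

lemma UnitaryGroup.inner_toLinearIsometryEquiv_apply (U : unitaryGroup n 𝕜)
    (x y : EuclideanSpace 𝕜 n) :
    inner 𝕜 y (toLinearIsometryEquiv U x) = ∑ i, conj (y i) * ((U : Matrix n n 𝕜) *ᵥ x.ofLp) i := by
  simp [PiLp.inner_apply, toLinearIsometryEquiv_apply, mul_comm]

lemma UnitaryGroup.isIrreducible_toLinearIsometryEquiv_comp {ρ : G →* unitaryGroup n ℂ}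
    (hirr : ∀ S : Submodule ℂ (n → ℂ), (∀ (g : G) (x : n → ℂ), x ∈ S →
      (ρ g : Matrix n n ℂ) *ᵥ x ∈ S) → S = ⊥ ∨ S = ⊤) :
    UnitaryRep.IsIrreducible (toLinearIsometryEquiv.comp ρ) := by
  intro S hS
  set e := WithLp.linearEquiv 2 ℂ (n → ℂ)
  have hmap := hirr (S.map (e : EuclideanSpace ℂ n →ₗ[ℂ] n → ℂ)) (by
    rintro g _ ⟨x, hx, rfl⟩
    exact ⟨_, hS g x hx, rfl⟩)
  simpa only [Submodule.map_eq_bot_iff, Submodule.map_eq_top_iff] using hmap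

lemma GeneralLinearGroup.exists_linearIsometryEquiv_monoidHom [Fintype G]
    (ρ : G →* GL n ℂ) :
    ∃ π : G →* (EuclideanSpace ℂ n ≃ₗᵢ[ℂ] EuclideanSpace ℂ n), ∀ g, π g = 1 → ρ g = 1 := by
  let φ : Matrix n n ℂ →* (EuclideanSpace ℂ n →L[ℂ] EuclideanSpace ℂ n) :=
    MonoidHomClass.toMonoidHom (toEuclideanCLM (n := n) (𝕜 := ℂ))
  obtain ⟨σ, hσ⟩ := exists_unitary_monoidHom ((Units.map φ).comp ρ)
  refine ⟨Unitary.linearIsometryEquiv.toMonoidHom.comp σ, fun g hg => ?_⟩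
  refine Units.map_injective (f := φ) (toEuclideanCLM (n := n) (𝕜 := ℂ)).injective ?_
  rw [map_one]
  exact hσ g ((MulEquiv.map_eq_one_iff Unitary.linearIsometryEquiv).mp hg)

end Matrix

lemma Real.rpow_neg_one_div_four_le {c x : ℝ} (hx : 1 ≤ x) (hc : (x ^ 3)⁻¹ ≤ c) :
    c ^ (-(1 : ℝ) / 4) ≤ x := by
  have hc' : (x ^ 4)⁻¹ ≤ c := le_trans (by gcongr; norm_num [hx]) hc
  calc c ^ (-(1 : ℝ) / 4) ≤ ((x ^ 4)⁻¹) ^ (-(1 : ℝ) / 4) :=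
        Real.rpow_le_rpow_of_nonpos (by positivity) hc' (by norm_num)
    _ = x := by
      rw [Real.inv_rpow (by positivity), ← Real.rpow_neg (by positivity), neg_div, neg_neg,
        one_div]
      exact_mod_cast Real.pow_rpow_inv_natCast (n := 4) (by positivity) (by norm_num)

/-- Part of the proof of Theorem 4.5 (Gowers, Quasirandom Groups): given a
nontrivial irreducible unitary representation `ρ : G → U(m)` of a finite group
`G` of order `n`, there are unit vectors `v, w ∈ ℂᵐ` such that the matrix
coefficient `f(g) = ⟨ρ(g)v, w⟩` takes values in the closed unit disc, sums to
zero, and satisfies `∑_h |∑_g f(g) conj(f(gh))|² ≥ n³/m⁴`. In particular, if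
every average-zero function into the closed unit disc is `c`-quasirandom, then
every nontrivial representation of `G` has dimension at least `c^{-1/4}`. -/
theorem matrix_coefficient_not_quasirandom
    (G : Type) [Group G] [Fintype G] (m : ℕ)
    (ρ : G →* Matrix.unitaryGroup (Fin m) ℂ)
    (hnt : ∃ g : G, ρ g ≠ 1)
    (hirr : ∀ S : Submodule ℂ (Fin m → ℂ),
      (∀ (g : G) (x : Fin m → ℂ), x ∈ S →
        (ρ g : Matrix (Fin m) (Fin m) ℂ).mulVec x ∈ S) → S = ⊥ ∨ S = ⊤) :
    (∃ v w : Fin m → ℂ,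
      (∑ i : Fin m, ‖v i‖ ^ 2 = 1) ∧ (∑ i : Fin m, ‖w i‖ ^ 2 = 1) ∧
      (∀ g : G,
        ‖∑ i : Fin m, (starRingEnd ℂ) (w i) * (ρ g : Matrix (Fin m) (Fin m) ℂ).mulVec v i‖ ≤ 1) ∧
      ((∑ g : G, ∑ i : Fin m,
          (starRingEnd ℂ) (w i) * (ρ g : Matrix (Fin m) (Fin m) ℂ).mulVec v i) = 0) ∧
      ((Fintype.card G : ℝ) ^ 3 / (m : ℝ) ^ 4 ≤
        ∑ h : G, ‖∑ g : G,
          (∑ i : Fin m, (starRingEnd ℂ) (w i) * (ρ g : Matrix (Fin m) (Fin m) ℂ).mulVec v i) *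
            (starRingEnd ℂ) (∑ i : Fin m,
              (starRingEnd ℂ) (w i) * (ρ (g * h) : Matrix (Fin m) (Fin m) ℂ).mulVec v i)‖ ^ 2))
    ∧
    (∀ c : ℝ,
      (∀ f : G → ℂ, (∀ g : G, ‖f g‖ ≤ 1) → (∑ g : G, f g) = 0 →
        ∑ h : G, ‖∑ g : G, f g * (starRingEnd ℂ) (f (g * h))‖ ^ 2
          ≤ c * (Fintype.card G : ℝ) ^ 3) →
      ∀ (d : ℕ) (ρ' : G →* Matrix.GeneralLinearGroup (Fin d) ℂ),
        (∃ g, ρ' g ≠ 1) → c ^ (-(1 : ℝ) / 4) ≤ (d : ℝ)) := by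
  refine ⟨?_, fun c hc d ρ' hnt' => ?_⟩
  · have hntπ : ∃ g, (Matrix.UnitaryGroup.toLinearIsometryEquiv.comp ρ) g ≠ 1 :=
      hnt.imp fun g => (map_ne_one_iff _ Matrix.UnitaryGroup.toLinearIsometryEquiv_injective).mpr
    have hirrπ := Matrix.UnitaryGroup.isIrreducible_toLinearIsometryEquiv_comp hirr
    obtain ⟨v, hv, hbound, hsum, henergy⟩ := hirrπ.exists_correlationEnergy_eq hntπ
    simp only [MonoidHom.comp_apply, Matrix.UnitaryGroup.inner_toLinearIsometryEquiv_apply,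
      correlationEnergy, finrank_euclideanSpace_fin] at hbound hsum henergy
    have hv' : ∑ i, ‖v i‖ ^ 2 = 1 := by rw [← EuclideanSpace.norm_sq_eq, hv, one_pow]
    refine ⟨v.ofLp, v.ofLp, hv', hv', hbound, hsum, henergy ▸ ?_⟩
    rw [div_pow]
    rcases m.eq_zero_or_pos with rfl | hm
    · simp
    · exact div_le_div_of_nonneg_left (by positivity) (by positivity)
        (pow_le_pow_right₀ (by exact_mod_cast hm) (by norm_num))
  · obtain ⟨π, hπ⟩ := Matrix.GeneralLinearGroup.exists_linearIsometryEquiv_monoidHom ρ'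
    obtain ⟨M, hM, hMd, f, hf1, hf0, hfE⟩ :=
      UnitaryRep.exists_correlationEnergy_eq (hnt'.imp fun g hg h1 => hg (hπ g h1))
    rw [finrank_euclideanSpace_fin] at hMd
    have h : (Fintype.card G / M : ℝ) ^ 3 ≤ c * Fintype.card G ^ 3 := hfE ▸ hc f hf1 hf0
    rw [div_pow, div_eq_mul_inv, mul_comm,
      mul_le_mul_iff_of_pos_right (by exact_mod_cast pow_pos Fintype.card_pos 3)] at h
    exact (Real.rpow_neg_one_div_four_le (by exact_mod_cast hM) h).trans (by exact_mod_cast hMd)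
end

section
/- There is an absolute constant c > 0 (one may take c = 1/2000) with the following property: if G is a finite group of order n that has a nontrivial complex representation of dimension k, then G has a product-free subset of size at least c^k·n. -/
/-!
Pick `g₀` with `ρ g₀ ≠ 1`. As `ρ g₀` has finite order it has an eigenvalue `ζ ≠ 1`, a root of
unity, and some power `ξ = ζ ^ j` has `Re ξ ≤ -1/2`, hence `‖ξ - 1‖ > 3/2`. Let `g = g₀ ^ j` and
`v` a corresponding eigenvector. For a `ρ`-invariant norm, `p x = ρ x v` maps `G` to the unit
sphere of a real space of dimension at most `2k`, with `p (a * x)` and `p (a * y)` as far apart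
as `p x` and `p y`, and `p (x * g) = ξ • p x`. If `p a`, `p b`, `p c` all lie within `1/2` of
`p 1`, then `p (a * g * b)` lies within `1` of `p g = ξ • p 1`, which is more than `3/2` away from
`p 1`; so `a * g * b ≠ c`. At most `5 ^ (2k)` points of the unit ball are `1/2`-separated (compare
volumes), so some `1/2`-ball around a point `p s` contains `p x` for at least `n / 25 ^ k`
elements `x`; translating these by `s⁻¹` and then by `g` on the left gives a product-free set.
-/

open Metric MeasureTheory Module Finset Polynomial Real

theorem IsOfFinOrder.exists_pow_re_le_neg_half {ζ : ℂ} (hζ : IsOfFinOrder ζ) (h1 : ζ ≠ 1) :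
    ∃ j : ℕ, (ζ ^ j).re ≤ -(1 / 2) := by
  set d := orderOf ζ
  have hd : 2 ≤ d := by
    have : d ≠ 1 := fun h => h1 (orderOf_eq_one_iff.mp h)
    have := hζ.orderOf_pos
    omega
  have : NeZero d := ⟨by omega⟩
  -- `exp (2πi ⌊d/2⌋ / d)` is a power of the primitive root `ζ`; its argument is in `[2π/3, π]`
  set a := d / 2
  set θ : ℝ := 2 * π * a / d
  have hθ : Complex.exp (θ * Complex.I) ^ d = 1 := by
    rw [← Complex.exp_nat_mul, ← Complex.exp_int_mul_two_pi_mul_I a]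
    congr 1
    have : (d : ℂ) ≠ 0 := Nat.cast_ne_zero.mpr (NeZero.ne d)
    push_cast [θ]
    field_simp
  obtain ⟨j, -, hj⟩ := (IsPrimitiveRoot.orderOf ζ).eq_pow_of_pow_eq_one hθ
  refine ⟨j, ?_⟩
  have h3 : (d : ℝ) ≤ 3 * a := by exact_mod_cast (by omega : d ≤ 3 * (d / 2))
  have h2 : 2 * (a : ℝ) ≤ d := by exact_mod_cast (by omega : 2 * (d / 2) ≤ d)
  have hcos : cos (π - π / 3) = -(1 / 2) := by rw [cos_pi_sub, cos_pi_div_three]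
  rw [hj, Complex.exp_ofReal_mul_I_re, ← hcos]
  apply Real.cos_le_cos_of_nonneg_of_le_pi (by linarith [pi_pos])
  · rw [div_le_iff₀ (by positivity)]; nlinarith [pi_pos]
  · rw [le_div_iff₀ (by positivity)]; nlinarith [pi_pos]

theorem Module.End.exists_hasEigenvalue_ne_one_of_pow_eq_one {K V : Type*} [Field K]
    [IsAlgClosed K] [AddCommGroup V] [Module K V] [FiniteDimensional K V] {f : End K V} {m : ℕ}
    (hm : (m : K) ≠ 0) (hf : f ^ m = 1) (hf1 : f ≠ 1) : ∃ μ, μ ≠ 1 ∧ f.HasEigenvalue μ := by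
  -- `X ^ m - 1` is squarefree, so `f` is diagonalizable; with `1` as only eigenvalue, `f = 1`
  have hss : f.IsSemisimple :=
    isSemisimple_of_squarefree_aeval_eq_zero (X_pow_sub_one_separable_iff.2 hm).squarefree
      (by simp [hf])
  by_contra! h
  have htop : f.eigenspace 1 = ⊤ := by
    refine eq_top_iff.2 (hss.iSup_eigenspace_eq_top.ge.trans (iSup_le fun μ => ?_))
    by_cases hμ : μ = 1
    · rw [hμ]
    · have : f.eigenspace μ = ⊥ := by simpa [hasEigenvalue_iff] using h μ hμ
      exact this ▸ bot_le
  exact hf1 (LinearMap.ext fun v => by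
    simpa using mem_eigenspace_iff.mp (htop ▸ Submodule.mem_top : v ∈ f.eigenspace 1))

theorem Module.End.HasEigenvalue.pow_eq_one {K V : Type*} [Field K] [AddCommGroup V] [Module K V]
    {f : End K V} {μ : K} {m : ℕ} (hμ : f.HasEigenvalue μ) (hf : f ^ m = 1) : μ ^ m = 1 := by
  obtain ⟨v, hv⟩ := hμ.exists_hasEigenvector
  refine smul_left_injective K hv.2 ?_
  simpa [hf] using (hv.pow_apply m).symm

theorem Complex.three_halves_lt_norm_sub_one {ξ : ℂ} (hξ : ‖ξ‖ = 1) (hre : ξ.re ≤ -(1 / 2)) :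
    3 / 2 < ‖ξ - 1‖ := by
  have h : ‖ξ - 1‖ ^ 2 = ‖ξ‖ ^ 2 - 2 * ξ.re + 1 := by
    simp only [Complex.sq_norm, Complex.normSq_apply, Complex.sub_re, Complex.sub_im,
      Complex.one_re, Complex.one_im]
    ring
  nlinarith [norm_nonneg (ξ - 1)]

section Covering

variable {ι α : Type*} [Fintype ι] [Nonempty ι] [PseudoMetricSpace α]

theorem exists_card_le_mul_card_dist_le (q : ι → α) {r : ℝ} (hr : 0 ≤ r) {N : ℕ}
    (hN : ∀ S : Finset ι, (S : Set ι).Pairwise (fun s t => r < dist (q s) (q t)) → #S ≤ N) :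
    ∃ s, Fintype.card ι ≤ N * #{x | dist (q x) (q s) ≤ r} := by
  classical
  obtain ⟨S, hS, hmax⟩ := exists_max_image
    {S : Finset ι | (S : Set ι).Pairwise fun s t => r < dist (q s) (q t)} card ⟨∅, by simp⟩
  have hsep := (mem_filter.1 hS).2
  -- a separated set of maximal size is an `r`-net
  have hcov (x : ι) : ∃ s ∈ S, dist (q x) (q s) ≤ r := by
    by_contra! hfar
    have hxS : x ∉ S := fun hx => (hfar x hx).not_ge (dist_self (q x) ▸ hr)
    have hins := hmax (insert x S) <| mem_filter.2 ⟨mem_univ _, by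
      rw [coe_insert]
      exact hsep.insert fun s hs _ => ⟨hfar s hs, dist_comm (q x) (q s) ▸ hfar s hs⟩⟩
    rw [card_insert_of_notMem hxS] at hins
    omega
  obtain ⟨s, hs, hsmax⟩ := exists_max_image S (fun t => #{x | dist (q x) (q t) ≤ r})
    (let ⟨t, ht, _⟩ := hcov (Classical.arbitrary ι); ⟨t, ht⟩)
  refine ⟨s, ?_⟩
  calc Fintype.card ι = #(S.biUnion fun t => {x | dist (q x) (q t) ≤ r}) := by
        rw [← card_univ]
        congr 1
        exact (eq_univ_of_forall fun x => by simpa using hcov x).symm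
    _ ≤ #S * #{x | dist (q x) (q s) ≤ r} := card_biUnion_le_card_mul _ _ _ hsmax
    _ ≤ N * #{x | dist (q x) (q s) ≤ r} := Nat.mul_le_mul_right _ (hN S hsep)

end Covering

theorem card_le_of_pairwise_lt_dist {E : Type*} [NormedAddCommGroup E] [NormedSpace ℝ E]
    [FiniteDimensional ℝ E] {T : Finset E} {ε : ℝ} (hε : 0 < ε) (hT : ∀ x ∈ T, ‖x‖ ≤ 1)
    (hsep : (T : Set E).Pairwise fun x y => ε < dist x y) :
    (T.card : ℝ) ≤ (1 + 2 / ε) ^ finrank ℝ E := by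
  let : MeasurableSpace E := borel E
  have : BorelSpace E := ⟨rfl⟩
  set μ : Measure E := Measure.addHaar
  set d := finrank ℝ E
  have hdisj : (T : Set E).PairwiseDisjoint fun x => closedBall x (ε / 2) :=
    hsep.mono' fun x y h => closedBall_disjoint_closedBall (by linarith)
  have hsub : ⋃ x ∈ T, closedBall x (ε / 2) ⊆ closedBall 0 (1 + ε / 2) :=
    Set.iUnion₂_subset fun x hx =>
      closedBall_subset_closedBall' (by linarith [hT x hx, dist_zero_right x])
  have hvol (x : E) {r : ℝ} (hr : 0 ≤ r) :
      μ.real (closedBall x r) = r ^ d * μ.real (closedBall 0 1) :=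
    Measure.addHaar_real_closedBall' μ x hr
  have hunit : 0 < μ.real (closedBall 0 1) :=
    ENNReal.toReal_pos (measure_closedBall_pos μ 0 one_pos).ne' measure_closedBall_lt_top.ne
  have hcomp : T.card * (ε / 2) ^ d * μ.real (closedBall 0 1)
      ≤ (1 + ε / 2) ^ d * μ.real (closedBall 0 1) :=
    calc T.card * (ε / 2) ^ d * μ.real (closedBall 0 1)
        = ∑ x ∈ T, μ.real (closedBall x (ε / 2)) := by
          simp [hvol _ (half_pos hε).le, mul_assoc]
      _ = μ.real (⋃ x ∈ T, closedBall x (ε / 2)) :=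
          (measureReal_biUnion_finset hdisj (fun _ _ => measurableSet_closedBall)
            fun _ _ => measure_closedBall_lt_top.ne).symm
      _ ≤ μ.real (closedBall 0 (1 + ε / 2)) := measureReal_mono hsub measure_closedBall_lt_top.ne
      _ = (1 + ε / 2) ^ d * μ.real (closedBall 0 1) := hvol 0 (by positivity)
  have hratio : (1 + 2 / ε) ^ d = (1 + ε / 2) ^ d / (ε / 2) ^ d := by
    rw [← div_pow]; congr 1; field_simp; ring
  rw [hratio, le_div_iff₀ (by positivity)]
  exact le_of_mul_le_mul_right hcomp hunit

def IsProductFree {G : Type*} [Mul G] (Y : Set G) : Prop :=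
  ∀ x ∈ Y, ∀ y ∈ Y, ∀ z ∈ Y, x * y ≠ z

section Group

variable {G E : Type*} [Group G] {g : G}

theorem mul_mul_ne_of_dist_le [PseudoMetricSpace E] {p : G → E} {r : ℝ}
    (hleft : ∀ a x y, dist (p (a * x)) (p (a * y)) = dist (p x) (p y))
    (hright : ∀ x y, dist (p (x * g)) (p (y * g)) = dist (p x) (p y))
    (hfar : 3 * r < dist (p g) (p 1)) {a b c : G} (ha : dist (p a) (p 1) ≤ r)
    (hb : dist (p b) (p 1) ≤ r) (hc : dist (p c) (p 1) ≤ r) :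
    a * g * b ≠ c := by
  rintro rfl
  have hag : dist (p g) (p (a * g)) ≤ r := by
    rw [dist_comm, ← one_mul g, ← mul_assoc, mul_one, hright]
    exact ha
  have hagb : dist (p (a * g)) (p (a * g * b)) ≤ r := by
    have h := hleft (a * g) 1 b
    rw [mul_one] at h
    rw [h, dist_comm]
    exact hb
  linarith [dist_triangle4 (p g) (p (a * g)) (p (a * g * b)) (p 1)]

theorem exists_isProductFree_of_isometric_translations [Fintype G] [NormedAddCommGroup E]
    [NormedSpace ℝ E] [FiniteDimensional ℝ E] {p : G → E} (hnorm : ∀ x, ‖p x‖ ≤ 1)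
    (hleft : ∀ a x y, dist (p (a * x)) (p (a * y)) = dist (p x) (p y))
    (hright : ∀ x y, dist (p (x * g)) (p (y * g)) = dist (p x) (p y))
    (hfar : 3 / 2 < dist (p g) (p 1)) :
    ∃ Y : Finset G, IsProductFree (Y : Set G) ∧ Fintype.card G ≤ 5 ^ finrank ℝ E * #Y := by
  classical
  have hpack (S : Finset G) (hS : (S : Set G).Pairwise fun s t => 1 / 2 < dist (p s) (p t)) :
      #S ≤ 5 ^ finrank ℝ E := by
    have hinj : Set.InjOn p S := fun x hx y hy hxy => by_contra fun hne => by
      have h : 1 / 2 < dist (p x) (p y) := hS hx hy hne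
      rw [hxy, dist_self] at h
      norm_num at h
    have hT := card_le_of_pairwise_lt_dist (T := S.image p) (ε := 1 / 2) (by norm_num)
      (by simpa using fun x _ => hnorm x) (by rwa [coe_image, hinj.pairwise_image])
    rw [card_image_of_injOn hinj] at hT
    norm_num at hT
    exact_mod_cast hT
  obtain ⟨s, hs⟩ := exists_card_le_mul_card_dist_le p (by norm_num) hpack
  -- `s⁻¹ • B` lies in the `1/2`-ball about `1`, and its left translate by `g` is product-free
  set B := ({x | dist (p x) (p s) ≤ 1 / 2} : Finset G)
  have hB {x} (hx : x ∈ B) : dist (p (s⁻¹ * x)) (p 1) ≤ 1 / 2 := by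
    rw [← inv_mul_cancel s, hleft]
    exact (mem_filter.1 hx).2
  refine ⟨B.map (mulLeftEmbedding (g * s⁻¹)), ?_, by rwa [card_map]⟩
  simp only [IsProductFree, coe_map, Set.forall_mem_image, mulLeftEmbedding_apply, mem_coe]
  intro x hx y hy z hz hxyz
  refine mul_mul_ne_of_dist_le hleft hright (by linarith) (hB hx) (hB hy) (hB hz) ?_
  exact mul_left_cancel (a := g) (by simpa only [mul_assoc] using hxyz)

end Group

namespace Representation

variable {G V : Type*} [Group G] [NormedAddCommGroup V] [NormedSpace ℂ V]
  (ρ : Representation ℂ G V)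

/-- For finite `G`, the sup norm of `ρ.orbitMap u` is a `ρ`-invariant norm of `u`. -/
def orbitMap : V →ₗ[ℂ] G → V := LinearMap.pi fun g => ρ g

@[simp]
theorem orbitMap_apply (u : V) (g : G) : ρ.orbitMap u g = ρ g u := rfl

theorem orbitMap_injective : Function.Injective ρ.orbitMap := fun u w h => by
  simpa using congrFun h 1

theorem norm_orbitMap_apply [Fintype G] (a : G) (u : V) :
    ‖ρ.orbitMap (ρ a u)‖ = ‖ρ.orbitMap u‖ := by
  have hcomp : ρ.orbitMap (ρ a u) = ρ.orbitMap u ∘ Equiv.mulRight a := by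
    ext g
    simp [map_mul]
  have hle (f : G → V) (e : G ≃ G) : ‖f ∘ e‖ ≤ ‖f‖ :=
    (pi_norm_le_iff_of_nonneg (norm_nonneg f)).2 fun i => norm_le_pi_norm f (e i)
  have hcomp' : ρ.orbitMap u = ρ.orbitMap (ρ a u) ∘ (Equiv.mulRight a).symm := by
    rw [hcomp]
    ext g
    simp
  refine le_antisymm ?_ ?_
  · rw [hcomp]
    exact hle _ _
  · rw [hcomp']
    exact hle _ _

theorem exists_isProductFree_card_le [Fintype G] [FiniteDimensional ℂ V] (hρ : ∃ g, ρ g ≠ 1) :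
    ∃ Y : Finset G, IsProductFree (Y : Set G) ∧ Fintype.card G ≤ 25 ^ finrank ℂ V * #Y := by
  obtain ⟨g₀, hg₀⟩ := hρ
  have hfin : ρ g₀ ^ Fintype.card G = 1 := by rw [← map_pow, pow_card_eq_one, map_one]
  obtain ⟨ζ, hζ1, hζ⟩ := Module.End.exists_hasEigenvalue_ne_one_of_pow_eq_one
    (Nat.cast_ne_zero.2 Fintype.card_ne_zero) hfin hg₀
  have hζord : IsOfFinOrder ζ :=
    isOfFinOrder_iff_pow_eq_one.2 ⟨_, Fintype.card_pos, hζ.pow_eq_one hfin⟩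
  obtain ⟨j, hre⟩ := hζord.exists_pow_re_le_neg_half hζ1
  obtain ⟨w, hw⟩ := hζ.exists_hasEigenvector
  set g := g₀ ^ j
  set ξ := ζ ^ j
  have hξ : ‖ξ‖ = 1 := hζord.pow.norm_eq_one
  have hw0 : ρ.orbitMap w ≠ 0 := (map_ne_zero_iff _ ρ.orbitMap_injective).2 hw.2
  set v := ((‖ρ.orbitMap w‖⁻¹ : ℝ) : ℂ) • w
  have hv : ‖ρ.orbitMap v‖ = 1 := by
    simp [v, norm_smul, hw0]
  have hgw : ρ g w = ξ • w := by
    rw [map_pow]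
    exact hw.pow_apply j
  have hgv : ρ g v = ξ • v := by rw [map_smul, hgw, smul_comm]
  let p : G → LinearMap.range ρ.orbitMap := fun x => ρ.orbitMap.rangeRestrict (ρ x v)
  have hdist (x y : G) : dist (p x) (p y) = ‖ρ.orbitMap (ρ x v - ρ y v)‖ := by
    rw [dist_eq_norm, ← map_sub]; rfl
  have hpg (x : G) : p (x * g) = ξ • p x := by
    ext1
    simp [p, map_mul, hgv]
  have hnorm (x : G) : ‖p x‖ = 1 := by simp [p, norm_orbitMap_apply, hv]
  obtain ⟨Y, hY, hcard⟩ := exists_isProductFree_of_isometric_translations (p := p) (g := g)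
    (fun x => (hnorm x).le)
    (fun a x y => by
      rw [hdist, hdist, map_mul, map_mul, Module.End.mul_apply, Module.End.mul_apply, ← map_sub,
        norm_orbitMap_apply])
    (fun x y => by
      rw [hpg, hpg, dist_eq_norm, dist_eq_norm, ← smul_sub ξ (p x) (p y), norm_smul, hξ, one_mul])
    (by
      rw [← one_mul g, hpg, dist_eq_norm, ← one_smul ℂ (p 1), smul_smul, mul_one, ← sub_smul,
        norm_smul, hnorm, mul_one]
      exact Complex.three_halves_lt_norm_sub_one hξ hre)
  refine ⟨Y, hY, hcard.trans (Nat.mul_le_mul_right _ ?_)⟩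
  calc 5 ^ finrank ℝ (LinearMap.range ρ.orbitMap)
      = 25 ^ finrank ℂ (LinearMap.range ρ.orbitMap) := by
        rw [finrank_real_of_complex, pow_mul]
        norm_num
    _ ≤ 25 ^ finrank ℂ V := Nat.pow_le_pow_right (by norm_num) (LinearMap.finrank_range_le _)

end Representation

/-- Theorem 4.6 (Gowers, Quasirandom Groups): there is an absolute constant
`c > 0` such that any finite group of order `n` with a nontrivial complex
representation of dimension `k` has a product-free subset of size at least
`cᵏ n`. -/
theorem product_free_from_low_dim_rep :
    ∃ c : ℝ, 0 < c ∧
      ∀ (G : Type) [Group G] [Fintype G] (k : ℕ)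
        (ρ : G →* Matrix.GeneralLinearGroup (Fin k) ℂ),
        (∃ g, ρ g ≠ 1) →
        ∃ Y : Finset G, (∀ x ∈ Y, ∀ y ∈ Y, ∀ z ∈ Y, x * y ≠ z) ∧
          c ^ k * (Fintype.card G : ℝ) ≤ (Y.card : ℝ) := by
  refine ⟨1 / 25, by norm_num, fun G _ _ k ρ hρ => ?_⟩
  let σ : Representation ℂ G (Fin k → ℂ) :=
    (Units.coeHom _).comp (Matrix.GeneralLinearGroup.toLin.toMonoidHom.comp ρ)
  have hσ : ∃ g, σ g ≠ 1 := hρ.imp fun g hg h1 =>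
    hg ((MulEquiv.map_eq_one_iff Matrix.GeneralLinearGroup.toLin).1 (Units.val_eq_one.1 h1))
  obtain ⟨Y, hY, hcard⟩ := σ.exists_isProductFree_card_le hσ
  rw [finrank_fin_fun] at hcard
  refine ⟨Y, hY, ?_⟩
  rw [one_div_pow, one_div_mul_eq_div, div_le_iff₀ (by positivity)]
  exact_mod_cast hcard.trans_eq (mul_comm _ _)
end

section
/- Let G be a finite simple group of order n that is not cyclic (equivalently, a nonabelian finite simple group). Then every nontrivial complex representation of G has dimension at least √(log n)/2, where log denotes the natural logarithm; equivalently, if G has a nontrivial complex representation of dimension k, then n ≤ 25^{k²}. -/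
/-!
Averaging `star (ρ g) * ρ g` over `G` gives an invariant positive element whose square root
conjugates any representation of a finite group into the unitary group, and a nontrivial
representation of a simple group is faithful. Let `g ≠ 1` minimise `δ = ‖π g - 1‖`. Since
`‖⁅u, v⁆ - 1‖ ≤ 2 ‖u - 1‖ ‖v - 1‖` for unitaries, `δ < 1/2` would force every conjugate of `g` to
commute with `g`, making `g` central and the simple group `G` abelian. So the points `π g` are
`1/2`-separated in the unit ball of a real space of dimension `2 d²`, and a volume count gives
`|G| ≤ 5 ^ (2 d²) = 25 ^ (d²)`.
-/

open scoped commutatorElement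

section SimpleGroup

variable {G : Type*} [Group G] [IsSimpleGroup G]

theorem IsSimpleGroup.injective_of_exists_ne_one {M : Type*} [MulOneClass M] (f : G →* M)
    (hf : ∃ g, f g ≠ 1) : Function.Injective f := by
  refine (MonoidHom.ker_eq_bot_iff f).1 <|
    (MonoidHom.normal_ker f).eq_bot_or_eq_top.resolve_right ?_
  obtain ⟨g, hg⟩ := hf
  exact fun htop => hg (f.mem_ker.1 (htop ▸ Subgroup.mem_top g))

theorem IsSimpleGroup.isCyclic_of_isMulCommutative [IsMulCommutative G] : IsCyclic G :=
  haveI : Fact (Nat.card G).Prime := ⟨Group.is_simple_iff_prime_card.1 ‹_›⟩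
  isCyclic_of_prime_card rfl

theorem IsSimpleGroup.isMulCommutative_of_forall_commute_conj {g : G} (hg : g ≠ 1)
    (hcomm : ∀ x : G, Commute (x * g * x⁻¹) g) : IsMulCommutative G := by
  have hclosure : Subgroup.normalClosure {g} = ⊤ :=
    (Subgroup.normalClosure_normal).eq_bot_or_eq_top.resolve_left fun hbot =>
      hg (Subgroup.mem_bot.1 (hbot ▸ Subgroup.subset_normalClosure rfl))
  have hcenter : g ∈ Subgroup.center G := by
    rw [← Subgroup.centralizer_univ, ← Subgroup.coe_top, ← hclosure, Subgroup.normalClosure,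
      Subgroup.centralizer_closure, Subgroup.mem_centralizer_iff]
    rintro _ hx
    obtain ⟨_, rfl, hconj⟩ := Group.mem_conjugatesOfSet_iff.1 hx
    obtain ⟨x, rfl⟩ := isConj_iff.1 hconj
    exact (hcomm x).eq
  refine Subgroup.center_eq_top_iff.1 <|
    (inferInstance : (Subgroup.center G).Normal).eq_bot_or_eq_top.resolve_left fun hbot => hg ?_
  exact Subgroup.mem_bot.1 (hbot ▸ hcenter)

theorem IsSimpleGroup.one_le_mul_of_commutatorElement_le [Finite G] (hG : ¬IsMulCommutative G)
    {f : G → ℝ} {C : ℝ} (hf_pos : ∀ g ≠ 1, 0 < f g) (hf_conj : ∀ g x, f (x * g * x⁻¹) = f g)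
    (hf_comm : ∀ a b, f ⁅a, b⁆ ≤ C * f a * f b) {g : G} (hg : g ≠ 1) : 1 ≤ C * f g := by
  obtain ⟨g₀, hg₀, hmin⟩ := Set.exists_min_image {g : G | g ≠ 1} f (Set.toFinite _) ⟨g, hg⟩
  have hδ := hf_pos g₀ hg₀
  have hC : 1 ≤ C * f g₀ := by
    by_contra! hlt
    refine hG (isMulCommutative_of_forall_commute_conj hg₀ fun x => ?_)
    by_contra hne
    have hc : ⁅x * g₀ * x⁻¹, g₀⁆ ≠ 1 := by rwa [Ne, commutatorElement_eq_one_iff_commute]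
    have hle := hf_comm (x * g₀ * x⁻¹) g₀
    rw [hf_conj] at hle
    -- `f ⁅x * g₀ * x⁻¹, g₀⁆ ≤ C * f g₀ ^ 2 < f g₀` contradicts the minimality of `f g₀`
    nlinarith [hmin _ hc]
  calc 1 ≤ C * f g₀ := hC
    _ ≤ C * f g := mul_le_mul_of_nonneg_left (hmin g hg) (by nlinarith)

end SimpleGroup

section Unitary

variable {A : Type*}

theorem Units.conj_mem_unitary_of_star_mul_mul_eq [Monoid A] [StarMul A] (S M : Aˣ)
    (h : star (M : A) * (star ↑S * ↑S) * M = star ↑S * ↑S) :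
    ((S * M * S⁻¹ : Aˣ) : A) ∈ unitary A := by
  refine (Units.isUnit _).mem_unitary_iff_star_mul_self.2 ?_
  calc star ((S * M * S⁻¹ : Aˣ) : A) * ((S * M * S⁻¹ : Aˣ) : A)
      = star (↑S⁻¹ : A) * (star (M : A) * (star ↑S * ↑S) * M) * ↑S⁻¹ := by
        simp only [Units.val_mul, star_mul, mul_assoc]
    _ = star ((S * S⁻¹ : Aˣ) : A) * ((S * S⁻¹ : Aˣ) : A) := by
        rw [h]; simp only [Units.val_mul, star_mul, mul_assoc]
    _ = 1 := by simp

variable [NormedRing A] [StarRing A] [CStarRing A]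

theorem Unitary.norm_conj_sub_one (u v : unitary A) :
    ‖((u * v * u⁻¹ : unitary A) : A) - 1‖ = ‖(v : A) - 1‖ := by
  have h : ((u * v * u⁻¹ : unitary A) : A) - 1 = u * ((v : A) - 1) * ↑u⁻¹ := by
    rw [mul_sub, sub_mul, mul_one, ← Submonoid.coe_mul, ← Submonoid.coe_mul, ← Submonoid.coe_mul,
      mul_inv_cancel, Submonoid.coe_one]
  rw [h, CStarRing.norm_mul_coe_unitary, CStarRing.norm_coe_unitary_mul]

theorem Unitary.norm_commutatorElement_sub_one_le (u v : unitary A) :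
    ‖((⁅u, v⁆ : unitary A) : A) - 1‖ ≤ 2 * ‖(u : A) - 1‖ * ‖(v : A) - 1‖ := by
  set x : A := u - 1
  set y : A := v - 1
  have h : ((⁅u, v⁆ : unitary A) : A) - 1 = (x * y - y * x) * ↑(u⁻¹ * v⁻¹) := by
    have e : x * y - y * x = ((u * v : unitary A) : A) - ((v * u : unitary A) : A) := by
      simp only [x, y, Submonoid.coe_mul]
      noncomm_ring
    rw [e, sub_mul, ← Submonoid.coe_mul, ← Submonoid.coe_mul, commutatorElement_def,
      show v * u * (u⁻¹ * v⁻¹) = 1 by group, show u * v * (u⁻¹ * v⁻¹) = u * v * u⁻¹ * v⁻¹ by group,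
      Submonoid.coe_one]
  calc ‖((⁅u, v⁆ : unitary A) : A) - 1‖ = ‖x * y - y * x‖ := by
        rw [h, CStarRing.norm_mul_coe_unitary]
    _ ≤ ‖x‖ * ‖y‖ + ‖y‖ * ‖x‖ :=
        (norm_sub_le _ _).trans (add_le_add (norm_mul_le _ _) (norm_mul_le _ _))
    _ = 2 * ‖x‖ * ‖y‖ := by ring

end Unitary

section Unitarization

variable {G A : Type*} [Group G] [Fintype G] [CStarAlgebra A] [PartialOrder A]
  [StarOrderedRing A]

theorem MonoidHom.exists_conj_unitary (ρ : G →* Aˣ) :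
    ∃ (S : Aˣ) (π : G →* unitary A), ∀ g, (π g : A) = ↑(S * ρ g * S⁻¹) := by
  set P : A := ∑ g, star (ρ g : A) * ρ g
  have hP_inv : ∀ g, star (ρ g : A) * P * ρ g = P := by
    intro g
    simp only [P, Finset.mul_sum, Finset.sum_mul]
    exact Fintype.sum_equiv (Equiv.mulRight g) _ _ fun h => by simp [mul_assoc]
  have hP : IsStrictlyPositive P := by
    classical
    simp only [P]
    rw [← Finset.add_sum_erase _ _ (Finset.mem_univ 1), map_one, Units.val_one, star_one, one_mul]
    exact isStrictlyPositive_one.add_nonneg (Finset.sum_nonneg fun g _ => star_mul_self_nonneg _)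
  set S := (hP.isUnit_cfcSqrt).unit
  have hS : star (S : A) * S = P := by
    rw [IsUnit.unit_spec, (CFC.sqrt_nonneg P).isSelfAdjoint.star_eq,
      CFC.sqrt_mul_sqrt_self P hP.nonneg]
  have hmem : ∀ g, ((S * ρ g * S⁻¹ : Aˣ) : A) ∈ unitary A := fun g =>
    Units.conj_mem_unitary_of_star_mul_mul_eq S (ρ g) (by rw [hS, hP_inv])
  exact ⟨S, ((Units.coeHom A).comp ((MulAut.conj S).toMonoidHom.comp ρ)).codRestrict _ hmem,
    fun g => rfl⟩

end Unitarization

theorem IsSimpleGroup.card_le_of_injective_unitary {G A : Type*} [Group G] [Fintype G]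
    [IsSimpleGroup G] (hG : ¬IsMulCommutative G) [CStarAlgebra A] [FiniteDimensional ℝ A]
    (π : G →* unitary A) (hπ : Function.Injective π) :
    Fintype.card G ≤ 5 ^ Module.finrank ℝ A := by
  have hsep : ∀ g ≠ 1, 1 ≤ 2 * ‖(π g : A) - 1‖ := fun _ =>
    one_le_mul_of_commutatorElement_le (f := fun g => ‖(π g : A) - 1‖) hG
      (fun g hg => norm_sub_pos_iff.2 fun h => hg (hπ (Subtype.ext (by simpa using h))))
      (fun g x => by rw [map_mul, map_mul, map_inv, Unitary.norm_conj_sub_one])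
      (fun a b => by
        rw [map_commutatorElement]; exact Unitary.norm_commutatorElement_sub_one_le _ _)
  let f : G → A := fun g => (2 : ℝ) • (π g : A)
  have hf : Function.Injective f := fun a b h =>
    hπ (Subtype.ext (smul_right_injective A two_ne_zero h))
  rw [← Finset.card_univ, ← Finset.card_map ⟨f, hf⟩]
  refine Besicovitch.card_le_of_separated _ (Finset.forall_mem_map.2 fun g _ => ?_)
    (Finset.forall_mem_map.2 fun a _ => Finset.forall_mem_map.2 fun b _ hab => ?_)
  · show ‖(2 : ℝ) • (π g : A)‖ ≤ 2
    nontriviality A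
    simp [norm_smul]
  · show 1 ≤ ‖(2 : ℝ) • (π a : A) - (2 : ℝ) • (π b : A)‖
    rw [← smul_sub, norm_smul, Real.norm_two, Unitary.norm_sub_eq, Unitary.star_eq_inv, ← map_inv,
      ← map_mul]
    exact hsep _ fun h => hab (by rw [mul_inv_eq_one.1 h])

theorem Real.sqrt_log_div_two_le_of_le_pow {x : ℝ} (hx : 0 < x) {d : ℕ} (h : x ≤ 25 ^ (d ^ 2)) :
    √(Real.log x) / 2 ≤ d := by
  have h25 : Real.log 25 ≤ 4 := by
    rw [Real.log_le_iff_le_exp (by norm_num)]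
    calc (25 : ℝ) = 5 ^ 2 := by norm_num
      _ ≤ Real.exp 2 ^ 2 := by
        gcongr
        linarith [Real.quadratic_le_exp_of_nonneg (zero_le_two (α := ℝ))]
      _ = Real.exp 4 := by rw [← Real.exp_nat_mul]; norm_num
  have hlog : Real.log x ≤ (2 * d) ^ 2 :=
    calc Real.log x ≤ Real.log (25 ^ (d ^ 2)) := Real.log_le_log hx h
      _ = d ^ 2 * Real.log 25 := by rw [Real.log_pow]; push_cast; ring
      _ ≤ (2 * d) ^ 2 := by nlinarith
  calc √(Real.log x) / 2 ≤ √((2 * d) ^ 2) / 2 := by gcongr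
    _ = d := by rw [Real.sqrt_sq (by positivity)]; ring

open scoped Matrix.Norms.L2Operator MatrixOrder in
/-- Theorem 4.7 (Gowers, Quasirandom Groups): every nontrivial complex
representation of a non-cyclic finite simple group of order `n` has dimension
at least `√(log n) / 2`. -/
theorem simple_group_min_rep_dimension
    (G : Type) [Group G] [Fintype G] [IsSimpleGroup G] (hnc : ¬ IsCyclic G)
    (d : ℕ) (ρ : G →* Matrix.GeneralLinearGroup (Fin d) ℂ)
    (hnt : ∃ g, ρ g ≠ 1) :
    Real.sqrt (Real.log (Fintype.card G)) / 2 ≤ (d : ℝ) := by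
  obtain ⟨S, π, hπ⟩ := ρ.exists_conj_unitary
  have hρ := IsSimpleGroup.injective_of_exists_ne_one ρ hnt
  have hπ_inj : Function.Injective π := fun a b h => hρ <| by
    simpa using (Units.ext (by rw [← hπ, ← hπ, h]) : S * ρ a * S⁻¹ = S * ρ b * S⁻¹)
  have hG : ¬IsMulCommutative G := fun _ => hnc IsSimpleGroup.isCyclic_of_isMulCommutative
  have hcard := IsSimpleGroup.card_le_of_injective_unitary hG π hπ_inj
  rw [Module.finrank_matrix, Complex.finrank_real_complex, Fintype.card_fin] at hcard
  refine Real.sqrt_log_div_two_le_of_le_pow (by exact_mod_cast Fintype.card_pos) ?_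
  have h25 : 5 ^ (d * d * 2) = 25 ^ d ^ 2 := by rw [← sq, mul_comm, pow_mul]; norm_num
  exact_mod_cast hcard.trans_eq h25
end

section
/- Let G be a finite group and let m be such that for every proper normal subgroup H of G (i.e., every normal subgroup H with H ≠ G), the quotient group G/H is nonabelian and has order at least m. Then every nontrivial complex representation of G has dimension at least √(log m)/2, where log denotes the natural logarithm; equivalently, if G has a nontrivial complex representation of dimension k, then m ≤ 25^{k²}. -/
/-!
Averaging `ρ(g)⋆ ρ(g)` over `G` gives an invariant positive element whose square root
conjugates `ρ` into a unitary representation `σ`. In a finite group of unitaries, elements at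
operator-norm distance `< 1/2` from `1` commute with each other (a Frobenius–Jordan argument), so
they generate a normal subgroup `T` of `G` on which `σ` is abelian. Distinct cosets of `T` are
sent to points of the unit ball at distance `≥ 1/2`, and a volume comparison in the
`2d²`-dimensional real space of matrices bounds their number by `5 ^ (2d²)`. If `T = G`, then
`G ⧸ ker ρ` is abelian, which is excluded; otherwise `m ≤ |G ⧸ T| ≤ 5 ^ (2d²)`, and `log 5 < 2`.
-/

open scoped commutatorElement

lemma norm_mul_sub_mul_le {R : Type*} [SeminormedRing R] (x y : R) :
    ‖x * y - y * x‖ ≤ 2 * (‖1 - x‖ * ‖1 - y‖) := by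
  have h : x * y - y * x = (1 - x) * (1 - y) - (1 - y) * (1 - x) := by noncomm_ring
  calc ‖x * y - y * x‖ ≤ ‖(1 - x) * (1 - y)‖ + ‖(1 - y) * (1 - x)‖ := h ▸ norm_sub_le _ _
    _ ≤ ‖1 - x‖ * ‖1 - y‖ + ‖1 - y‖ * ‖1 - x‖ := add_le_add (norm_mul_le _ _) (norm_mul_le _ _)
    _ = 2 * (‖1 - x‖ * ‖1 - y‖) := by ring

lemma commutatorElement_pow_left {G : Type*} [Group G] {a b : G} (h : Commute a ⁅a, b⁆) (n : ℕ) :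
    ⁅a ^ n, b⁆ = ⁅a, b⁆ ^ n := by
  induction n with
  | zero => simp
  | succ n ih =>
    calc ⁅a ^ (n + 1), b⁆ = a * ⁅a ^ n, b⁆ * a⁻¹ * ⁅a, b⁆ := by
          simp only [commutatorElement_def, pow_succ']; group
      _ = ⁅a, b⁆ ^ (n + 1) := by rw [ih, (h.pow_right n).eq, pow_succ]; group

section CStarRing

variable {R : Type*} [NormedRing R] [StarRing R] [CStarRing R]

lemma norm_one_sub_conj_unitary (k u : unitary R) :
    ‖(1 : R) - ↑(k * u * k⁻¹)‖ = ‖(1 : R) - u‖ := by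
  calc ‖(1 : R) - ↑(k * u * k⁻¹)‖ = ‖((1 : R) - ↑(k * u * k⁻¹)) * k‖ :=
        (CStarRing.norm_mul_coe_unitary _ _).symm
    _ = ‖(k : R) * (1 - u)‖ := by
        rw [sub_mul, one_mul, ← Submonoid.coe_mul, inv_mul_cancel_right, Submonoid.coe_mul,
          mul_sub, mul_one]
    _ = ‖(1 : R) - u‖ := CStarRing.norm_coe_unitary_mul _ _

lemma norm_one_sub_commutatorElement_unitary (u v : unitary R) :
    ‖(1 : R) - ↑⁅u, v⁆‖ = ‖(u : R) * v - v * u‖ := by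
  calc ‖(1 : R) - ↑⁅u, v⁆‖ = ‖((1 : R) - ↑⁅u, v⁆) * ↑(v * u)‖ :=
        (CStarRing.norm_mul_coe_unitary _ _).symm
    _ = ‖(v : R) * u - u * v‖ := by
        rw [sub_mul, one_mul, ← Submonoid.coe_mul, commutatorElement_def,
          show u * v * u⁻¹ * v⁻¹ * (v * u) = u * v by group]
        simp only [Submonoid.coe_mul]
    _ = ‖(u : R) * v - v * u‖ := norm_sub_rev _ _

lemma norm_coe_unitary_sub_coe (u v : unitary R) : ‖(u : R) - v‖ = ‖(1 : R) - ↑(u⁻¹ * v)‖ := by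
  rw [← CStarRing.norm_coe_unitary_mul u (1 - _), mul_sub, mul_one, ← Submonoid.coe_mul,
    mul_inv_cancel_left]

lemma norm_unitary_mul_sub_mul_le (u : unitary R) (y : R) :
    ‖(u : R) * y - y * u‖ ≤ 2 * ‖1 - y‖ := by
  have h : (u : R) * y - y * u = (u : R) * (y - 1) - (y - 1) * u := by noncomm_ring
  calc ‖(u : R) * y - y * u‖ ≤ ‖(u : R) * (y - 1)‖ + ‖(y - 1) * (u : R)‖ := h ▸ norm_sub_le _ _
    _ = 2 * ‖1 - y‖ := by
        rw [CStarRing.norm_coe_unitary_mul, CStarRing.norm_mul_coe_unitary, norm_sub_rev]; ring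

lemma norm_coe_unitary_le_one (u : unitary R) : ‖(u : R)‖ ≤ 1 := by
  rcases subsingleton_or_nontrivial R with hR | hR
  · simp [Subsingleton.elim (u : R) 0]
  · exact (CStarRing.norm_coe_unitary u).le

end CStarRing

/-- The average `D` of the powers of `c` satisfies `‖1 - D‖ < 1`, so it is a unit, while
`(c - 1) * D = 0`. -/
lemma eq_one_of_isOfFinOrder_of_norm_one_sub_pow_lt_one {R : Type*} [NormedRing R]
    [NormedAlgebra ℝ R] [CompleteSpace R] {c : R} (hc : IsOfFinOrder c)
    (h : ∀ n : ℕ, ‖1 - c ^ n‖ < 1) : c = 1 := by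
  obtain ⟨N, hN, hcN⟩ := hc.exists_pow_eq_one
  set D : R := (N : ℝ)⁻¹ • ∑ n ∈ Finset.range N, c ^ n
  have hD : IsUnit D := by
    have h1 : 1 - D = (N : ℝ)⁻¹ • ∑ n ∈ Finset.range N, (1 - c ^ n) := by
      rw [Finset.sum_sub_distrib, smul_sub, Finset.sum_const, Finset.card_range,
        ← Nat.cast_smul_eq_nsmul ℝ, smul_smul, inv_mul_cancel₀ (by positivity), one_smul]
    have h2 : ‖1 - D‖ < 1 := by
      rw [h1, norm_smul, norm_inv, Real.norm_natCast, inv_mul_lt_one₀ (by positivity)]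
      calc ‖∑ n ∈ Finset.range N, (1 - c ^ n)‖ ≤ ∑ n ∈ Finset.range N, ‖1 - c ^ n‖ :=
            norm_sum_le _ _
        _ < ∑ n ∈ Finset.range N, 1 :=
            Finset.sum_lt_sum_of_nonempty (Finset.nonempty_range_iff.2 hN.ne') fun n _ => h n
        _ = N := by simp
    simpa using isUnit_one_sub_of_norm_lt_one h2
  have hzero : (c - 1) * D = 0 := by
    rw [mul_smul_comm, mul_geom_sum, hcN, sub_self, smul_zero]
  exact sub_eq_zero.1 (hD.mul_left_eq_zero.1 hzero)

section UnitaryGroup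

variable {R : Type*} [NormedRing R] [StarRing R] [CStarRing R] [NormedAlgebra ℝ R] [CompleteSpace R]

lemma commutatorElement_eq_one_of_commute {a b : unitary R} (hb : ‖1 - (b : R)‖ < 1 / 2)
    (hcomm : Commute a ⁅a, b⁆) (hfin : IsOfFinOrder ⁅a, b⁆) : ⁅a, b⁆ = 1 := by
  refine Subtype.ext (eq_one_of_isOfFinOrder_of_norm_one_sub_pow_lt_one
    ((unitary R).subtype.isOfFinOrder hfin) fun n => ?_)
  calc ‖1 - ((⁅a, b⁆ : unitary R) : R) ^ n‖ = ‖1 - ((⁅a ^ n, b⁆ : unitary R) : R)‖ := by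
        rw [commutatorElement_pow_left hcomm, SubmonoidClass.coe_pow]
    _ = ‖((a ^ n : unitary R) : R) * b - b * ↑(a ^ n)‖ := norm_one_sub_commutatorElement_unitary _ _
    _ ≤ 2 * ‖1 - (b : R)‖ := norm_unitary_mul_sub_mul_le _ _
    _ < 1 := by linarith

/-- Induction on `‖1 - a‖`: the commutator `⁅a, b⁆` is strictly closer to `1` than `a`, hence
commutes with `a`; then `⁅a ^ n, b⁆ = ⁅a, b⁆ ^ n` stays close to `1` for all `n`. -/
theorem commute_of_norm_one_sub_lt_half (K : Subgroup (unitary R)) [Finite K] {a b : unitary R}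
    (ha : a ∈ K) (hb : b ∈ K) (ha' : ‖1 - (a : R)‖ < 1 / 2) (hb' : ‖1 - (b : R)‖ < 1 / 2) :
    Commute a b := by
  have hwf : (K : Set (unitary R)).WellFoundedOn fun x y => ‖1 - (x : R)‖ < ‖1 - (y : R)‖ :=
    Set.wellFoundedOn_image.1
      (Set.toFinite _ |>.image fun u : unitary R => ‖1 - (u : R)‖).wellFoundedOn
  refine hwf.induction ha (P := fun a => ‖1 - (a : R)‖ < 1 / 2 → ∀ b ∈ K,
    ‖1 - (b : R)‖ < 1 / 2 → Commute a b) ?_ ha' b hb hb'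
  clear! a b
  intro a ha ih ha' b hb hb'
  rcases eq_or_ne a 1 with rfl | ha1
  · exact Commute.one_left b
  have hpos : 0 < ‖1 - (a : R)‖ :=
    norm_pos_iff.2 (sub_ne_zero.2 fun h => ha1 (Subtype.ext h.symm))
  have hC : ⁅a, b⁆ ∈ K := by
    rw [commutatorElement_def]
    exact K.mul_mem (K.mul_mem (K.mul_mem ha hb) (K.inv_mem ha)) (K.inv_mem hb)
  have hlt : ‖1 - ((⁅a, b⁆ : unitary R) : R)‖ < ‖1 - (a : R)‖ := calc
    _ = ‖(a : R) * b - b * a‖ := norm_one_sub_commutatorElement_unitary a b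
    _ ≤ 2 * (‖1 - (a : R)‖ * ‖1 - (b : R)‖) := norm_mul_sub_mul_le _ _
    _ < ‖1 - (a : R)‖ := by nlinarith
  have hcomm : Commute ⁅a, b⁆ a := ih _ hC hlt (hlt.trans ha') a ha ha'
  exact commutatorElement_eq_one_iff_commute.1 <| commutatorElement_eq_one_of_commute hb'
    hcomm.symm (K.subtype.isOfFinOrder (isOfFinOrder_of_finite (⟨_, hC⟩ : K)))

end UnitaryGroup

section Unitarization

variable {G A : Type*} [Group G] [Fintype G] [CStarAlgebra A]

def gram (ρ : G →* Aˣ) : A := ∑ g, star (ρ g : A) * ρ g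

lemma star_mul_gram_mul (ρ : G →* Aˣ) (g : G) : star (ρ g : A) * gram ρ * ρ g = gram ρ := by
  rw [gram, Finset.mul_sum, Finset.sum_mul]
  refine Fintype.sum_equiv (Equiv.mulRight g) _ _ fun h => ?_
  simp only [Equiv.coe_mulRight, map_mul, Units.val_mul, star_mul, mul_assoc]

variable [PartialOrder A] [StarOrderedRing A]

open CFC

lemma one_le_gram (ρ : G →* Aˣ) : 1 ≤ gram ρ := by
  classical
  rw [gram, ← Finset.add_sum_erase _ _ (Finset.mem_univ 1)]
  simp only [map_one, Units.val_one, star_one, mul_one]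
  exact le_add_of_nonneg_right (Finset.sum_nonneg fun g _ => star_mul_self_nonneg _)

noncomputable def unitarizer (ρ : G →* Aˣ) : Aˣ :=
  (isUnit_sqrt_iff _ (zero_le_one.trans (one_le_gram ρ))).2
    (CStarAlgebra.isUnit_of_le 1 (one_le_gram ρ)) |>.unit

lemma mem_unitary_unitarizer_conj (ρ : G →* Aˣ) (g : G) :
    (MulAut.conj (unitarizer ρ) (ρ g) : A) ∈ unitary A := by
  set Q := unitarizer ρ
  have hQ : star Q = Q := Units.ext (sqrt_nonneg _).isSelfAdjoint.star_eq
  have hQQ : (Q : A) * Q = gram ρ := sqrt_mul_sqrt_self _ (zero_le_one.trans (one_le_gram ρ))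
  set x := MulAut.conj Q (ρ g)
  have hx : star x * x = 1 := by
    refine Units.ext ?_
    calc ((star x * x : Aˣ) : A) = ↑Q⁻¹ * (star (ρ g : A) * (Q * Q) * ρ g) * ↑Q⁻¹ := by
          simp only [x, MulAut.conj_apply, star_mul, star_inv, hQ, Units.val_mul, Units.coe_star,
            mul_assoc]
      _ = 1 := by rw [hQQ, star_mul_gram_mul, ← hQQ]; simp [← mul_assoc]
  simpa [Unitary.mem_iff, ← Units.coe_star, ← Units.val_mul] using ⟨hx, mul_eq_one_comm.1 hx⟩

noncomputable def unitarization (ρ : G →* Aˣ) : G →* unitary A :=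
  ((Units.coeHom A).comp ((MulAut.conj (unitarizer ρ)).toMonoidHom.comp ρ)).codRestrict _
    (mem_unitary_unitarizer_conj ρ)

lemma ker_unitarization (ρ : G →* Aˣ) : (unitarization ρ).ker = ρ.ker := by
  ext g
  rw [MonoidHom.mem_ker, MonoidHom.mem_ker, ← Subtype.coe_inj]
  change (MulAut.conj (unitarizer ρ) (ρ g) : A) = 1 ↔ ρ g = 1
  rw [Units.val_eq_one, map_eq_one_iff _ (MulAut.conj _).injective]

end Unitarization

section FiniteGroup

variable {G R : Type*} [Group G] [Finite G] [NormedRing R] [StarRing R] [CStarRing R]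
  [NormedAlgebra ℝ R] [FiniteDimensional ℝ R]

lemma card_quotient_le_five_pow (σ : G →* unitary R) (H : Subgroup G)
    (hH : ∀ g, ‖1 - (σ g : R)‖ < 1 / 2 → g ∈ H) : Nat.card (G ⧸ H) ≤ 5 ^ Module.finrank ℝ R := by
  classical
  have : Fintype (G ⧸ H) := Fintype.ofFinite _
  set f : G ⧸ H → R := fun q => (2 : ℝ) • (σ q.out : R)
  have hsep : ∀ q₁ q₂, q₁ ≠ q₂ → 1 ≤ ‖f q₁ - f q₂‖ := by
    intro q₁ q₂ hne
    rw [← smul_sub, norm_smul, Real.norm_two, norm_coe_unitary_sub_coe, ← map_inv, ← map_mul]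
    by_contra! h
    exact hne (by simpa using QuotientGroup.eq.2 (hH (q₁.out⁻¹ * q₂.out) (by linarith)))
  have hinj : f.Injective := fun q₁ q₂ h => by
    by_contra hne
    exact absurd (hsep _ _ hne) (by simp [h])
  calc Nat.card (G ⧸ H) = (Finset.univ.image f).card := by
        rw [Finset.card_image_of_injective _ hinj, Finset.card_univ, Nat.card_eq_fintype_card]
    _ ≤ 5 ^ Module.finrank ℝ R := by
        refine Besicovitch.card_le_of_separated _ ?_ ?_
        · simp only [Finset.mem_image, Finset.mem_univ, true_and, forall_exists_index,
            forall_apply_eq_imp_iff, f, norm_smul, Real.norm_two]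
          intro q
          linarith [norm_coe_unitary_le_one (σ q.out)]
        · simp only [Finset.mem_image, Finset.mem_univ, true_and, forall_exists_index,
            forall_apply_eq_imp_iff]
          exact fun q₁ q₂ hne => hsep q₁ q₂ fun h => hne (h ▸ rfl)

theorem exists_normal_commute_card_quotient_le (σ : G →* unitary R) :
    ∃ T : Subgroup G, T.Normal ∧ (∀ x ∈ T, ∀ y ∈ T, Commute (σ x) (σ y)) ∧
      Nat.card (G ⧸ T) ≤ 5 ^ Module.finrank ℝ R := by
  have := FiniteDimensional.complete ℝ R
  have : Finite σ.range := Set.finite_range σ |>.to_subtype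
  set S : Set G := {g | ‖1 - (σ g : R)‖ < 1 / 2}
  refine ⟨Subgroup.normalClosure S, inferInstance, ?_,
    card_quotient_le_five_pow σ _ fun g hg => Subgroup.subset_normalClosure hg⟩
  set Z := Subgroup.closure {u | u ∈ σ.range ∧ ‖1 - (u : R)‖ < 1 / 2}
  have hZ : IsMulCommutative Z := Subgroup.isMulCommutative_closure fun u hu v hv =>
    (commute_of_norm_one_sub_lt_half σ.range hu.1 hv.1 hu.2 hv.2).eq
  have hle : Subgroup.normalClosure S ≤ Z.comap σ := by
    refine Subgroup.closure_le _ |>.2 fun x hx => ?_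
    obtain ⟨a, ha, hax⟩ := Group.mem_conjugatesOfSet_iff.1 hx
    obtain ⟨c, rfl⟩ := isConj_iff.1 hax
    refine Subgroup.subset_closure ⟨⟨_, rfl⟩, ?_⟩
    rwa [map_mul, map_mul, map_inv, norm_one_sub_conj_unitary]
  exact fun x hx y hy => setLike_mul_comm (s := Z) (hle hx) (hle hy)

end FiniteGroup

lemma sqrt_log_div_two_le_of_le_five_pow {m d : ℕ} (h : m ≤ 5 ^ (d * d * 2)) :
    Real.sqrt (Real.log m) / 2 ≤ d := by
  have hlog5 : Real.log 5 < 2 := by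
    rw [Real.log_lt_iff_lt_exp (by norm_num), show (2 : ℝ) = 1 + 1 by norm_num, Real.exp_add]
    nlinarith [Real.exp_one_gt_d9]
  have hlog : Real.log m ≤ (2 * d) ^ 2 := by
    rcases m.eq_zero_or_pos with rfl | hm
    · simp only [CharP.cast_eq_zero, Real.log_zero]; positivity
    calc Real.log m ≤ Real.log ((5 : ℕ) ^ (d * d * 2) : ℕ) :=
          Real.log_le_log (by exact_mod_cast hm) (by exact_mod_cast h)
      _ = (d * d * 2 : ℕ) * Real.log 5 := by push_cast; rw [Real.log_pow]; push_cast; ring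
      _ ≤ (2 * d) ^ 2 := by push_cast; nlinarith [Real.log_nonneg (show (1 : ℝ) ≤ 5 by norm_num)]
  have := Real.sqrt_le_sqrt hlog
  rw [Real.sqrt_sq (by positivity)] at this
  linarith

open scoped Matrix.Norms.L2Operator MatrixOrder in
/-- Theorem 4.8 (Gowers, Quasirandom Groups): if every quotient of a finite
group `G` by a proper normal subgroup is nonabelian of order at least `m`, then
every nontrivial complex representation of `G` has dimension at least
`√(log m) / 2`. -/
theorem min_rep_dimension_of_no_small_or_abelian_quotient
    (G : Type) [Group G] [Fintype G] (m : ℕ)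
    (hquot : ∀ (H : Subgroup G) [H.Normal], H ≠ ⊤ →
      (∃ a b : G ⧸ H, a * b ≠ b * a) ∧ m ≤ Nat.card (G ⧸ H))
    (d : ℕ) (ρ : G →* Matrix.GeneralLinearGroup (Fin d) ℂ)
    (hnt : ∃ g, ρ g ≠ 1) :
    Real.sqrt (Real.log m) / 2 ≤ (d : ℝ) := by
  set σ := unitarization ρ
  obtain ⟨T, hT, hcomm, hcard⟩ := exists_normal_commute_card_quotient_le σ
  by_cases hTtop : T = ⊤
  · have hker : σ.ker ≠ ⊤ := by
      obtain ⟨g, hg⟩ := hnt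
      rw [ker_unitarization]
      exact fun h => hg (ρ.mem_ker.1 (h ▸ Subgroup.mem_top g))
    obtain ⟨a, b, hab⟩ := (hquot σ.ker hker).1
    subst hTtop
    refine absurd (QuotientGroup.kerLift_injective σ ?_) hab
    induction a using QuotientGroup.induction_on
    induction b using QuotientGroup.induction_on
    simpa using (hcomm _ (Subgroup.mem_top _) _ (Subgroup.mem_top _)).eq
  · refine sqrt_log_div_two_le_of_le_five_pow ((hquot T hTtop).2.trans ?_)
    simpa [Module.finrank_matrix] using hcard
end

section
/- Let G be a finite group of order n such that every nontrivial complex representation of G has dimension at least k. Let A₁, A₂, A₃, A₁₂, A₁₃, A₂₃ and A₁₂₃ be subsets of G of sizes p₁n, p₂n, p₃n, p₁₂n, p₁₃n, p₂₃n and p₁₂₃n respectively. Then, provided that each of the products p₁p₂p₁₂, p₁p₃p₁₃, p₁p₂₃p₁₂₃ and p₂p₃p₂₃p₁₂p₁₃p₁₂₃ is at least 16/k, there exist elements x₁ ∈ A₁, x₂ ∈ A₂ and x₃ ∈ A₃ such that x₁x₂ ∈ A₁₂, x₁x₃ ∈ A₁₃, x₂x₃ ∈ A₂₃ and x₁x₂x₃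 ∈ A₁₂₃. -/
/-!
Gowers' quasirandomness argument. For `f : G → ℂ` of mean zero let `T` be left convolution by
`f` on `ℓ²(G)`. `T` commutes with right translations, so every eigenspace of `T* T` is a
representation of `G`; for a positive eigenvalue this representation is nontrivial (a
translation-invariant vector is constant and is killed by `T`), hence has dimension at least `k`.
As the eigenvalues sum to `tr (T* T) = n ‖f‖²`, each of them is at most `n ‖f‖² / k`, which bounds
`‖T‖²`. With `f = 1_P - |P|/n` and `h = 1_{S⁻¹}` this says that the number of `z ∈ S` with
`x z ∈ P` is close to `|S||P|/n` for most `x`. The density conditions then leave some `x₁ ∈ A₁`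
whose three fibres `{x₂ ∈ A₂ | x₁x₂ ∈ A₁₂}`, `{x₃ ∈ A₃ | x₁x₃ ∈ A₁₃}`, `{y ∈ A₂₃ | x₁y ∈ A₁₂₃}`
are at least half their expected size, and these are large enough for the same estimate to give
`x₂`, `x₃` in the first two with `x₂x₃` in the third.
-/

open Module Finset
open scoped InnerProductSpace

namespace LinearMap

variable {𝕜 V W : Type*} [RCLike 𝕜] [NormedAddCommGroup V] [InnerProductSpace 𝕜 V]
  [FiniteDimensional 𝕜 V] [NormedAddCommGroup W] [InnerProductSpace 𝕜 W] [FiniteDimensional 𝕜 W]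

theorem IsSymmetric.re_inner_apply_le {T : V →ₗ[𝕜] V} (hT : T.IsSymmetric) {n : ℕ}
    (hn : finrank 𝕜 V = n) {c : ℝ} (hc : ∀ i, hT.eigenvalues hn i ≤ c) (v : V) :
    RCLike.re ⟪v, T v⟫_𝕜 ≤ c * ‖v‖ ^ 2 := by
  set b := hT.eigenvectorBasis hn
  have hcoord (i : Fin n) : ⟪b i, T v⟫_𝕜 = hT.eigenvalues hn i * ⟪b i, v⟫_𝕜 := by
    rw [← hT, hT.apply_eigenvectorBasis, inner_smul_left, RCLike.conj_ofReal]
  calc RCLike.re ⟪v, T v⟫_𝕜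
      = ∑ i, hT.eigenvalues hn i * ‖⟪b i, v⟫_𝕜‖ ^ 2 := by
        rw [← b.sum_inner_mul_inner, map_sum]
        refine sum_congr rfl fun i _ => ?_
        rw [hcoord, mul_left_comm, ← inner_conj_symm, RCLike.conj_mul, ← RCLike.ofReal_pow,
          ← RCLike.ofReal_mul, RCLike.ofReal_re]
    _ ≤ ∑ i, c * ‖⟪b i, v⟫_𝕜‖ ^ 2 := by gcongr with i; exact hc i
    _ = c * ‖v‖ ^ 2 := by rw [← mul_sum, b.sum_sq_norm_inner_right]

theorem mul_norm_sq_apply_le_of_le_finrank_eigenspace {k : ℕ} (T : V →ₗ[𝕜] W)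
    (hk : ∀ μ : ℝ, 0 < μ → Module.End.HasEigenvalue (T.adjoint ∘ₗ T) (μ : 𝕜) →
      k ≤ finrank 𝕜 (Module.End.eigenspace (T.adjoint ∘ₗ T) (μ : 𝕜))) (v : V) :
    k * ‖T v‖ ^ 2 ≤ RCLike.re ((T.adjoint ∘ₗ T).trace 𝕜 V) * ‖v‖ ^ 2 := by
  have hS := T.isPositive_adjoint_comp_self
  set μ := hS.isSymmetric.eigenvalues rfl
  have hμ : ∀ i, 0 ≤ μ i := hS.nonneg_eigenvalues rfl
  have hmult (i) : k * μ i ≤ ∑ j, μ j := by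
    rcases (hμ i).eq_or_lt with h0 | hpos
    · rw [← h0, mul_zero]; exact sum_nonneg fun j _ => hμ j
    have hcard : k ≤ #{j | μ j = μ i} := by
      have := hS.isSymmetric.card_filter_eigenvalues_eq rfl (μ i : 𝕜)
      simp only [RCLike.ofReal_inj] at this
      rw [this]
      exact hk _ hpos (hS.isSymmetric.hasEigenvalue_eigenvalues rfl i)
    calc k * μ i ≤ #{j | μ j = μ i} * μ i := by gcongr
      _ = ∑ j with μ j = μ i, μ j := by rw [sum_congr rfl fun j hj => (mem_filter.1 hj).2]; simp
      _ ≤ ∑ j, μ j := sum_le_sum_of_subset_of_nonneg (subset_univ _) fun j _ _ => hμ j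
  have hnorm : ‖T v‖ ^ 2 = RCLike.re ⟪v, (T.adjoint ∘ₗ T) v⟫_𝕜 := by
    rw [comp_apply, adjoint_inner_right, inner_self_eq_norm_sq]
  rw [hS.isSymmetric.re_trace_eq_sum_eigenvalues rfl, hnorm]
  rcases Nat.eq_zero_or_pos k with rfl | hkpos
  · rw [Nat.cast_zero, zero_mul]
    exact mul_nonneg (sum_nonneg fun j _ => hμ j) (sq_nonneg _)
  have hkpos : (0 : ℝ) < k := by exact_mod_cast hkpos
  have := hS.isSymmetric.re_inner_apply_le rfl (c := (∑ j, μ j) / k)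
    (fun i => (le_div_iff₀' hkpos).2 (hmult i)) v
  rw [div_mul_eq_mul_div, le_div_iff₀' hkpos] at this
  exact this

end LinearMap

def IsQuasirandom (G : Type) [Group G] (k : ℕ) : Prop :=
  ∀ (d : ℕ) (ρ : G →* Matrix.GeneralLinearGroup (Fin d) ℂ), (∃ g, ρ g ≠ 1) → k ≤ d

theorem IsQuasirandom.le_finrank {G : Type} [Group G] {k : ℕ} (hG : IsQuasirandom G k)
    {V : Type*} [AddCommGroup V] [Module ℂ V] [FiniteDimensional ℂ V]
    (ρ : Representation ℂ G V) (hρ : ∃ g, ρ g ≠ 1) : k ≤ finrank ℂ V := by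
  let e := LinearMap.toMatrixAlgEquiv (Module.finBasis ℂ V)
  refine hG _ ((Units.map e.toMonoidHom).comp ρ.asGroupHom) ?_
  obtain ⟨g, hg⟩ := hρ
  refine ⟨g, fun h => hg (e.injective ?_)⟩
  simpa [Units.ext_iff, Representation.asGroupHom_apply] using h

noncomputable section

variable {G : Type} [Group G]

def rightRegular : Representation ℂ G (EuclideanSpace ℂ G) where
  toFun t :=
    { toFun := fun h => WithLp.toLp 2 fun x => h (x * t)
      map_add' := fun _ _ => rfl
      map_smul' := fun _ _ => rfl }
  map_one' := by ext h x; simp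
  map_mul' s t := by ext h x; exact congrArg h (mul_assoc x s t).symm

@[simp] lemma rightRegular_apply (t : G) (h : EuclideanSpace ℂ G) (x : G) :
    rightRegular t h x = h (x * t) := rfl

variable [Fintype G]

def leftConv (f : G → ℂ) : EuclideanSpace ℂ G →ₗ[ℂ] EuclideanSpace ℂ G where
  toFun h := WithLp.toLp 2 fun x => ∑ y, f y * h (y⁻¹ * x)
  map_add' h₁ h₂ := by ext x; simp [mul_add, sum_add_distrib]
  map_smul' c h := by ext x; simp [mul_sum, mul_left_comm]

@[simp] lemma leftConv_apply (f : G → ℂ) (h : EuclideanSpace ℂ G) (x : G) :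
    leftConv f h x = ∑ y, f y * h (y⁻¹ * x) := rfl

lemma leftConv_comp_rightRegular (f : G → ℂ) (t : G) :
    leftConv f ∘ₗ rightRegular t = rightRegular t ∘ₗ leftConv f := by
  ext h x; simp [mul_assoc]

lemma adjoint_rightRegular (t : G) :
    LinearMap.adjoint (rightRegular t) = rightRegular t⁻¹ := by
  refine ((LinearMap.eq_adjoint_iff _ _).2 fun u v => ?_).symm
  simp only [PiLp.inner_apply, rightRegular_apply]
  rw [← Equiv.sum_comp (Equiv.mulRight t)]
  simp

lemma commute_adjoint_leftConv_comp_self (f : G → ℂ) (t : G) :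
    Commute ((leftConv f).adjoint ∘ₗ leftConv f) (rightRegular t) := by
  have h := congrArg LinearMap.adjoint (leftConv_comp_rightRegular f t⁻¹)
  simp only [LinearMap.adjoint_comp, adjoint_rightRegular, inv_inv] at h
  rw [commute_iff_eq, Module.End.mul_eq_comp, Module.End.mul_eq_comp]
  rw [LinearMap.comp_assoc, leftConv_comp_rightRegular, ← LinearMap.comp_assoc, ← h,
    LinearMap.comp_assoc]

lemma leftConv_single [DecidableEq G] (f : G → ℂ) (x w : G) :
    leftConv f (EuclideanSpace.single x 1) w = f (w * x⁻¹) := by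
  rw [leftConv_apply, Fintype.sum_eq_single (w * x⁻¹) fun y hy => ?_]
  · simp
  · simp only [PiLp.single_apply, mul_ite, mul_one, mul_zero, ite_eq_right_iff]
    rintro rfl
    exact absurd (by group) hy

lemma re_trace_adjoint_leftConv_comp_self (f : G → ℂ) :
    RCLike.re (LinearMap.trace ℂ _ ((leftConv f).adjoint ∘ₗ leftConv f)) =
      Fintype.card G * ∑ x, ‖f x‖ ^ 2 := by
  classical
  rw [LinearMap.trace_eq_sum_inner _ (EuclideanSpace.basisFun G ℂ), map_sum]
  have hcol (x : G) : ‖leftConv f (EuclideanSpace.single x 1)‖ ^ 2 = ∑ y, ‖f y‖ ^ 2 := by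
    simp only [EuclideanSpace.norm_sq_eq, leftConv_single]
    exact Equiv.sum_comp (Equiv.mulRight x⁻¹) (fun y => ‖f y‖ ^ 2)
  simp only [EuclideanSpace.basisFun_apply, LinearMap.comp_apply, LinearMap.adjoint_inner_right,
    inner_self_eq_norm_sq, hcol, sum_const, card_univ, nsmul_eq_mul]

theorem IsQuasirandom.mul_norm_sq_leftConv_le {k : ℕ} (hG : IsQuasirandom G k) {f : G → ℂ}
    (hf : ∑ x, f x = 0) (h : EuclideanSpace ℂ G) :
    k * ‖leftConv f h‖ ^ 2 ≤ Fintype.card G * (∑ x, ‖f x‖ ^ 2) * ‖h‖ ^ 2 := by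
  rw [← re_trace_adjoint_leftConv_comp_self]
  refine (leftConv f).mul_norm_sq_apply_le_of_le_finrank_eigenspace (fun μ hμ hμS => ?_) h
  set S := (leftConv f).adjoint ∘ₗ leftConv f
  let ρ := rightRegular.subrepresentation (Module.End.eigenspace S (μ : ℂ)) fun t _ hv =>
    Module.End.mapsTo_genEigenspace_of_comm (commute_adjoint_leftConv_comp_self f t) _ _ hv
  refine hG.le_finrank ρ ?_
  obtain ⟨v, hv⟩ := hμS.exists_hasEigenvector
  by_contra! htriv
  have hconst (x : G) : v x = v 1 := by
    have := congrArg (fun w : Module.End.eigenspace S (μ : ℂ) => (w : EuclideanSpace ℂ G) 1)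
      (LinearMap.ext_iff.1 (htriv x) ⟨v, hv.1⟩)
    simpa [ρ] using this
  have hTv : leftConv f v = 0 := by
    ext x
    simp [hconst, ← sum_mul, hf]
  have hSv : S v = 0 := by simp [S, hTv]
  rw [hv.apply_eq_smul] at hSv
  exact hv.2 ((smul_eq_zero.1 hSv).resolve_left (Complex.ofReal_ne_zero.2 hμ.ne'))

variable [DecidableEq G]

lemma leftConv_indicator_inv_apply (f : G → ℂ) (S : Finset G) (x : G) :
    leftConv f (WithLp.toLp 2 fun z => if z⁻¹ ∈ S then 1 else 0) x = ∑ z ∈ S, f (x * z) := by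
  rw [leftConv_apply, ← Equiv.sum_comp (Equiv.mulLeft x)]
  simp [sum_ite_mem]

lemma norm_sq_indicator_inv (S : Finset G) :
    ‖(WithLp.toLp 2 fun z => if z⁻¹ ∈ S then 1 else 0 : EuclideanSpace ℂ G)‖ ^ 2 = #S := by
  rw [EuclideanSpace.norm_sq_eq, ← Equiv.sum_comp (Equiv.inv G)]
  simp [apply_ite]

lemma sum_sq_mul_indicator_sub_card_le (P : Finset G) :
    ∑ y, ((Fintype.card G : ℝ) * (if y ∈ P then 1 else 0) - #P) ^ 2
      ≤ (Fintype.card G : ℝ) ^ 2 * #P := by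
  set n : ℝ := (Fintype.card G : ℝ)
  have hpt (y : G) : (n * (if y ∈ P then 1 else 0) - #P) ^ 2
      = n * (n - 2 * #P) * (if y ∈ P then 1 else 0) + (#P : ℝ) ^ 2 := by
    split_ifs <;> ring
  simp only [hpt, sum_add_distrib, ← mul_sum, sum_boole, sum_const, card_univ, nsmul_eq_mul]
  rw [filter_univ_mem]
  nlinarith [show 0 ≤ n * (#P : ℝ) ^ 2 by positivity]

def mulFiber (S P : Finset G) (x : G) : Finset G := {z ∈ S | x * z ∈ P}

theorem IsQuasirandom.mul_sum_sq_le {k : ℕ} (hG : IsQuasirandom G k) (S P : Finset G) :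
    k * ∑ x, ((Fintype.card G : ℝ) * #(mulFiber S P x) - #S * #P) ^ 2
      ≤ (Fintype.card G : ℝ) ^ 3 * #S * #P := by
  set n : ℝ := (Fintype.card G : ℝ)
  -- `n` times the balanced indicator `1_P - |P|/n`, scaled to avoid division
  set g : G → ℝ := fun y => n * (if y ∈ P then 1 else 0) - #P
  have hg : ∑ y, ((g y : ℝ) : ℂ) = 0 := by
    rw [← Complex.ofReal_sum, Complex.ofReal_eq_zero]
    simp only [g, sum_sub_distrib, ← mul_sum, sum_boole, filter_univ_mem, sum_const, card_univ,
      nsmul_eq_mul, n]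
    ring
  have hconv (x : G) : leftConv (fun y => (g y : ℂ))
      (WithLp.toLp 2 fun z => if z⁻¹ ∈ S then 1 else 0) x
        = ((n * #(mulFiber S P x) - #S * #P : ℝ) : ℂ) := by
    rw [leftConv_indicator_inv_apply, ← Complex.ofReal_sum, mulFiber]
    simp only [g, sum_sub_distrib, ← mul_sum, sum_boole, sum_const, nsmul_eq_mul]
  have hmain := hG.mul_norm_sq_leftConv_le hg (WithLp.toLp 2 fun z => if z⁻¹ ∈ S then 1 else 0)
  simp only [EuclideanSpace.norm_sq_eq (leftConv _ _), hconv, Complex.norm_real,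
    Real.norm_eq_abs, sq_abs, norm_sq_indicator_inv] at hmain
  calc _ ≤ n * (∑ y, g y ^ 2) * #S := hmain
    _ ≤ n * (n ^ 2 * #P) * #S := by gcongr; exact sum_sq_mul_indicator_sub_card_le P
    _ = n ^ 3 * #S * #P := by ring

theorem IsQuasirandom.mul_card_mul_le_of_forall {k : ℕ} (hG : IsQuasirandom G k)
    {X S P : Finset G} {c : ℝ} (hc : 0 ≤ c)
    (hX : ∀ x ∈ X, ((#S : ℝ) * #P) ^ 2
      ≤ c * ((Fintype.card G : ℝ) * #(mulFiber S P x) - #S * #P) ^ 2) :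
    k * #X * ((#S : ℝ) * #P) ≤ c * (Fintype.card G : ℝ) ^ 3 := by
  set n : ℝ := (Fintype.card G : ℝ)
  set a : ℝ := (#S : ℝ) * #P
  have hsum : #X * a ^ 2 ≤ c * ∑ x, (n * #(mulFiber S P x) - #S * #P) ^ 2 := by
    calc #X * a ^ 2 = ∑ _x ∈ X, a ^ 2 := by rw [sum_const, nsmul_eq_mul]
      _ ≤ ∑ x ∈ X, c * (n * #(mulFiber S P x) - #S * #P) ^ 2 := sum_le_sum hX
      _ ≤ ∑ x, c * (n * #(mulFiber S P x) - #S * #P) ^ 2 :=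
        sum_le_sum_of_subset_of_nonneg (subset_univ X) fun x _ _ => by positivity
      _ = _ := by rw [mul_sum]
  have hvar := hG.mul_sum_sq_le S P
  have hmul : k * #X * a * a ≤ c * n ^ 3 * a := by
    calc k * #X * a * a = k * (#X * a ^ 2) := by ring
      _ ≤ k * (c * ∑ x, (n * #(mulFiber S P x) - #S * #P) ^ 2) := by gcongr
      _ ≤ c * (n ^ 3 * #S * #P) := by rw [mul_left_comm]; gcongr
      _ = c * n ^ 3 * a := by ring
  rcases (by positivity : (0 : ℝ) ≤ a).eq_or_lt with ha | ha
  · rw [← ha, mul_zero]; positivity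
  · exact le_of_mul_le_mul_right hmul ha

theorem IsQuasirandom.exists_mul_mem {k : ℕ} (hG : IsQuasirandom G k) {B C D : Finset G}
    (h : Fintype.card G ^ 3 < k * #B * #C * #D) : ∃ b ∈ B, ∃ c ∈ C, b * c ∈ D := by
  by_contra! hno
  have hB := hG.mul_card_mul_le_of_forall (X := B) (S := C) (P := D) zero_le_one fun x hx => by
    have : mulFiber C D x = ∅ := filter_eq_empty_iff.2 fun z hz => hno x hx z hz
    simp [this]
  rw [one_mul] at hB
  have : k * #B * #C * #D ≤ Fintype.card G ^ 3 := by
    rw [mul_assoc _ #C]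
    exact_mod_cast hB
  omega

def lowFiberSet (S P : Finset G) : Finset G :=
  {x | 2 * Fintype.card G * #(mulFiber S P x) ≤ #S * #P}

theorem IsQuasirandom.mul_card_lowFiberSet_le {k : ℕ} (hG : IsQuasirandom G k)
    (S P : Finset G) : k * #(lowFiberSet S P) * (#S * #P) ≤ 4 * Fintype.card G ^ 3 := by
  have := hG.mul_card_mul_le_of_forall (X := lowFiberSet S P) zero_le_four fun x hx => by
    have hx : (2 * Fintype.card G * #(mulFiber S P x) : ℝ) ≤ #S * #P := by
      exact_mod_cast (mem_filter.1 hx).2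
    nlinarith [(by positivity : (0 : ℝ) ≤ Fintype.card G * #(mulFiber S P x))]
  exact_mod_cast this

theorem IsQuasirandom.four_mul_card_lowFiberSet_le {k : ℕ} (hG : IsQuasirandom G k)
    {R S P : Finset G} (h : 16 * Fintype.card G ^ 3 ≤ k * (#R * #S * #P)) :
    4 * #(lowFiberSet S P) ≤ #R := by
  have hn : 0 < Fintype.card G := Fintype.card_pos
  have hpos : 0 < k * (#S * #P) := by
    refine Nat.pos_of_ne_zero fun h0 => ?_
    rw [show k * (#R * #S * #P) = #R * (k * (#S * #P)) by ring, h0, mul_zero] at h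
    have : 0 < 16 * Fintype.card G ^ 3 := by positivity
    omega
  refine le_of_mul_le_mul_right ?_ hpos
  calc 4 * #(lowFiberSet S P) * (k * (#S * #P))
      = 4 * (k * #(lowFiberSet S P) * (#S * #P)) := by ring
    _ ≤ 4 * (4 * Fintype.card G ^ 3) := Nat.mul_le_mul_left 4 (hG.mul_card_lowFiberSet_le S P)
    _ ≤ #R * (k * (#S * #P)) := by linarith

theorem cube_lt_mul_card_mulFiber {k : ℕ} {S₁ P₁ S₂ P₂ S₃ P₃ : Finset G} {x : G}
    (h₁ : x ∉ lowFiberSet S₁ P₁) (h₂ : x ∉ lowFiberSet S₂ P₂) (h₃ : x ∉ lowFiberSet S₃ P₃)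
    (h : 16 * Fintype.card G ^ 6 ≤ k * (#S₁ * #P₁ * (#S₂ * #P₂) * (#S₃ * #P₃))) :
    Fintype.card G ^ 3 < k * #(mulFiber S₁ P₁ x) * #(mulFiber S₂ P₂ x) * #(mulFiber S₃ P₃ x) := by
  simp only [lowFiberSet, mem_filter, mem_univ, true_and, not_le] at h₁ h₂ h₃
  have hn : 0 < Fintype.card G := Fintype.card_pos
  have h₁₂ := Nat.mul_lt_mul'' h₁ h₂
  have h₁₂₃ := Nat.mul_lt_mul'' h₁₂ h₃
  nlinarith [pow_pos hn 3]

end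

theorem sixteen_mul_le_of_div_le {k c N : ℕ} {x : ℝ} (hk : 0 < k) (hx : 16 / (k : ℝ) ≤ x)
    (hc : (c : ℝ) = x * N) : 16 * N ≤ k * c := by
  have hk' : (0 : ℝ) < k := by exact_mod_cast hk
  have : (16 : ℝ) * N ≤ k * c := by
    rw [hc, ← mul_assoc]
    exact mul_le_mul_of_nonneg_right ((div_le_iff₀' hk').1 hx) (Nat.cast_nonneg N)
  exact_mod_cast this

/-- Theorem 5.2 (Gowers, Quasirandom Groups): if every nontrivial complex
representation of a finite group `G` of order `n` has dimension at least `k`,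
and `A₁, A₂, A₃, A₁₂, A₁₃, A₂₃, A₁₂₃ ⊆ G` have densities `p₁, …, p₁₂₃` with
`p₁p₂p₁₂`, `p₁p₃p₁₃`, `p₁p₂₃p₁₂₃`, `p₂p₃p₂₃p₁₂p₁₃p₁₂₃` all at least `16/k`, then
there exist `x₁ ∈ A₁`, `x₂ ∈ A₂`, `x₃ ∈ A₃` with `x₁x₂ ∈ A₁₂`, `x₁x₃ ∈ A₁₃`,
`x₂x₃ ∈ A₂₃` and `x₁x₂x₃ ∈ A₁₂₃`. -/
theorem simultaneous_products_three_variables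
    (G : Type) [Group G] [Fintype G] (k : ℕ) (hk0 : 0 < k)
    (hrep : ∀ (d : ℕ) (ρ : G →* Matrix.GeneralLinearGroup (Fin d) ℂ),
      (∃ g, ρ g ≠ 1) → k ≤ d)
    (A1 A2 A3 A12 A13 A23 A123 : Finset G)
    (p1 p2 p3 p12 p13 p23 p123 : ℝ)
    (h1 : (A1.card : ℝ) = p1 * Fintype.card G)
    (h2 : (A2.card : ℝ) = p2 * Fintype.card G)
    (h3 : (A3.card : ℝ) = p3 * Fintype.card G)
    (h12 : (A12.card : ℝ) = p12 * Fintype.card G)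
    (h13 : (A13.card : ℝ) = p13 * Fintype.card G)
    (h23 : (A23.card : ℝ) = p23 * Fintype.card G)
    (h123 : (A123.card : ℝ) = p123 * Fintype.card G)
    (hc1 : 16 / (k : ℝ) ≤ p1 * p2 * p12)
    (hc2 : 16 / (k : ℝ) ≤ p1 * p3 * p13)
    (hc3 : 16 / (k : ℝ) ≤ p1 * p23 * p123)
    (hc4 : 16 / (k : ℝ) ≤ p2 * p3 * p23 * p12 * p13 * p123) :
    ∃ x1 ∈ A1, ∃ x2 ∈ A2, ∃ x3 ∈ A3,
      x1 * x2 ∈ A12 ∧ x1 * x3 ∈ A13 ∧ x2 * x3 ∈ A23 ∧ x1 * x2 * x3 ∈ A123 := by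
  classical
  have hG : IsQuasirandom G k := hrep
  have e₁ : 16 * Fintype.card G ^ 3 ≤ k * (#A1 * #A2 * #A12) :=
    sixteen_mul_le_of_div_le hk0 hc1 (by push_cast; rw [h1, h2, h12]; ring)
  have e₂ : 16 * Fintype.card G ^ 3 ≤ k * (#A1 * #A3 * #A13) :=
    sixteen_mul_le_of_div_le hk0 hc2 (by push_cast; rw [h1, h3, h13]; ring)
  have e₃ : 16 * Fintype.card G ^ 3 ≤ k * (#A1 * #A23 * #A123) :=
    sixteen_mul_le_of_div_le hk0 hc3 (by push_cast; rw [h1, h23, h123]; ring)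
  have e₄ : 16 * Fintype.card G ^ 6 ≤ k * (#A2 * #A12 * (#A3 * #A13) * (#A23 * #A123)) :=
    sixteen_mul_le_of_div_le hk0 hc4 (by push_cast; rw [h2, h3, h23, h12, h13, h123]; ring)
  obtain ⟨x1, hx1, hgood⟩ :
      ∃ x1 ∈ A1, x1 ∉ lowFiberSet A2 A12 ∪ lowFiberSet A3 A13 ∪ lowFiberSet A23 A123 := by
    refine exists_mem_notMem_of_card_lt_card ?_
    have hA1 : 0 < #A1 := by
      by_contra! h0
      rw [Nat.le_zero.1 h0] at e₁
      simp [Fintype.card_pos.ne'] at e₁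
    have := card_union_le (lowFiberSet A2 A12 ∪ lowFiberSet A3 A13) (lowFiberSet A23 A123)
    have := card_union_le (lowFiberSet A2 A12) (lowFiberSet A3 A13)
    have := hG.four_mul_card_lowFiberSet_le e₁
    have := hG.four_mul_card_lowFiberSet_le e₂
    have := hG.four_mul_card_lowFiberSet_le e₃
    omega
  simp only [mem_union, not_or] at hgood
  obtain ⟨x2, hx2, x3, hx3, hx23⟩ :=
    hG.exists_mul_mem (cube_lt_mul_card_mulFiber hgood.1.1 hgood.1.2 hgood.2 e₄)
  simp only [mulFiber, mem_filter] at hx2 hx3 hx23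
  exact ⟨x1, hx1, x2, hx2.1, x3, hx3.1, hx2.2, hx3.2, hx23.1, (mul_assoc x1 x2 x3).symm ▸ hx23.2⟩
end
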